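/- arXiv:2510.21128 — 11 statements merged into one kernel-verified Lean document; each statement's English description precedes it below -/
import Mathlib

section
/- Let f : 2^N → ℝ be a non-negative submodular function on a finite ground set N, and let S, A ⊆ N with A nonempty. Then the expectation over a uniformly random element x of A satisfies (1/|A|) · Σ_{x ∈ A} ( f(S) − f(S \ {x}) ) ≤ f(S)/|A|. -/
open Finset

/-- A set function on a finite ground set is submodular. -/
def Submodular {α : Type*} [DecidableEq α] (f : Finset α → ℝ) : Prop :=
  ∀ A B : Finset α, f A + f B ≥ f (A ∪ B) + f (A ∩ B)

lemma sum_removal_aux {α : Type*} [DecidableEq α] (f : Finset α → ℝ)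
    (hf : Submodular f) (S : Finset α) :
    ∀ T : Finset α, ∑ x ∈ T, (f S - f (S \ {x})) ≤ f S - f (S \ T) := by
  intro T
  induction T using Finset.induction_on with
  | empty => simp
  | @insert a T' ha ih =>
    rw [Finset.sum_insert ha]
    have key := hf (S \ {a}) (S \ T')
    have hu : (S \ {a}) ∪ (S \ T') = S := by
      rw [← Finset.sdiff_inter_distrib_right]
      have : ({a} : Finset α) ∩ T' = ∅ := by
        simp [Finset.singleton_inter_of_notMem ha]
      simp [this]
    have hi : (S \ {a}) ∩ (S \ T') = S \ insert a T' := by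
      rw [← Finset.sdiff_union_distrib, ← Finset.insert_eq]
    rw [hu, hi] at key
    linarith

theorem expected_removal_loss {α : Type*} [DecidableEq α] [Fintype α]
    (f : Finset α → ℝ) (hf0 : ∀ S : Finset α, 0 ≤ f S) (hf : Submodular f)
    (S A : Finset α) (hA : A.Nonempty) :
    (1 / (A.card : ℝ)) * ∑ x ∈ A, (f S - f (S \ {x})) ≤ f S / (A.card : ℝ) := by
  have hsum : ∑ x ∈ A, (f S - f (S \ {x})) ≤ f S := by
    have h1 : ∑ x ∈ A, (f S - f (S \ {x})) = ∑ x ∈ A ∩ S, (f S - f (S \ {x})) := by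
      rw [← Finset.sum_subset (Finset.inter_subset_left)]
      intro x hx hx'
      have : x ∉ S := by
        intro hxS
        exact hx' (Finset.mem_inter.mpr ⟨hx, hxS⟩)
      rw [← Finset.erase_eq, Finset.erase_eq_of_notMem this]
      ring
    rw [h1]
    calc ∑ x ∈ A ∩ S, (f S - f (S \ {x})) ≤ f S - f (S \ (A ∩ S)) :=
          sum_removal_aux f hf S (A ∩ S)
      _ ≤ f S := by have := hf0 (S \ (A ∩ S)); linarith
  have hApos : (0:ℝ) < A.card := by
    exact_mod_cast Finset.card_pos.mpr hA
  rw [one_div, div_eq_inv_mul]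
  exact mul_le_mul_of_nonneg_left hsum (by positivity)
end

section
/- Let f : 2^N → ℝ be a non-negative submodular function on a finite ground set N, let S, A ⊆ N, and let k be an integer with 1 ≤ k < |A|. Then the average over all size-k subsets B of A satisfies (1/binom(|A|,k)) · Σ_{B ⊆ A, |B| = k} f(S \ B) ≥ f(S) − (k/(|A| − k)) · max{ f(S') : S' ⊆ S ∩ A, |S'| ≥ |S ∩ A| − k }. -/
/-!
Write `T = S ∩ A` and let `g i` be the average of `f (T \ C)` over the `i`-subsets `C` of `A`,
so that `g 0 = f T`. Submodularity on the pair `S \ B`, `T` shows that the average of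
`f (S \ B)` is at least `f S - f T + g k`. Submodularity on `T \ (D \ B)`, `T \ B` for `B ⊆ D`,
averaged over a uniform `(i + k)`-subset `D` of `A` and a uniform `k`-subset `B` of `D`, gives
`g 0 + g (i + k) ≤ g i + g k`. Summing this over `i < |A| - k` telescopes to
`(|A| - k) (f T - g k) ≤ ∑_{i < k} (g i - g (|A| - k + i))`, and each `g i` with `i < k` is an
average of values of `f` entering the maximum, while `f ≥ 0` makes the subtracted terms harmless.
-/

open Finset
open scoped BigOperators

namespace Finset

variable {α K : Type*} [DecidableEq α]

theorem sum_range_sub_shift {M : Type*} [AddCommGroup M] (g : ℕ → M) (m k : ℕ) :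
    ∑ i ∈ range m, (g i - g (i + k)) = ∑ i ∈ range k, (g i - g (m + i)) := by
  have hm := sum_range_add g m k
  have hk := sum_range_add g k m
  rw [add_comm k m] at hk
  simp only [sum_sub_distrib, add_comm _ k]
  rw [sub_eq_sub_iff_add_eq_add, ← hm, hk, add_comm]

theorem sum_powersetCard_sum_powersetCard {M : Type*} [AddCommMonoid M] (A : Finset α)
    {i j : ℕ} (hij : i ≤ j) (h : Finset α → M) :
    ∑ D ∈ A.powersetCard j, ∑ E ∈ D.powersetCard i, h E =
      (#A - i).choose (j - i) • ∑ E ∈ A.powersetCard i, h E := by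
  rw [sum_comm' (t' := A.powersetCard i) (s' := fun E => (A.powersetCard j).filter (E ⊆ ·))
    fun D E => by grind, smul_sum]
  refine sum_congr rfl fun E hE => ?_
  obtain ⟨hEA, hEi⟩ := mem_powersetCard.mp hE
  rw [sum_const, card_filter_powersetCard_subset E A j hEA (hEi ▸ hij), hEi]

theorem expect_powersetCard_expect_powersetCard [Semifield K] [CharZero K] (A : Finset α)
    {i j : ℕ} (hij : i ≤ j) (hj : j ≤ #A) (h : Finset α → K) :
    𝔼 D ∈ A.powersetCard j, 𝔼 E ∈ D.powersetCard i, h E = 𝔼 E ∈ A.powersetCard i, h E := by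
  have hinner : ∀ D ∈ A.powersetCard j,
      𝔼 E ∈ D.powersetCard i, h E = (∑ E ∈ D.powersetCard i, h E) / j.choose i := by
    intro D hD
    rw [expect_eq_sum_div_card, card_powersetCard, (mem_powersetCard.mp hD).2]
  have hchoose : ((#A).choose j * j.choose i : K) = (#A).choose i * (#A - i).choose (j - i) := by
    exact_mod_cast Nat.choose_mul hij
  have hpos : ∀ {a b : ℕ}, b ≤ a → (a.choose b : K) ≠ 0 := fun h =>
    Nat.cast_ne_zero.mpr (Nat.choose_pos h).ne'
  rw [expect_congr rfl hinner, expect_eq_sum_div_card, expect_eq_sum_div_card, ← sum_div,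
    sum_powersetCard_sum_powersetCard A hij, card_powersetCard, card_powersetCard, nsmul_eq_mul,
    div_div, div_eq_div_iff (mul_ne_zero (hpos hij) (hpos hj)) (hpos (hij.trans hj))]
  calc _ = ((#A).choose i * (#A - i).choose (j - i) : K) * ∑ E ∈ A.powersetCard i, h E := by ring
    _ = _ := by rw [← hchoose]; ring

theorem expect_powersetCard_sdiff {M : Type*} [AddCommMonoid M] [Module ℚ≥0 M] (D : Finset α)
    {k : ℕ} (hk : k ≤ #D) (h : Finset α → M) :
    𝔼 B ∈ D.powersetCard k, h (D \ B) = 𝔼 E ∈ D.powersetCard (#D - k), h E := by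
  refine expect_nbij' (D \ ·) (D \ ·) ?_ ?_ ?_ ?_ fun _ _ => rfl
  · intro B hB
    rw [mem_powersetCard] at hB ⊢
    exact ⟨sdiff_subset, by rw [card_sdiff_of_subset hB.1, hB.2]⟩
  · intro E hE
    rw [mem_powersetCard] at hE ⊢
    exact ⟨sdiff_subset, by rw [card_sdiff_of_subset hE.1, hE.2]; omega⟩
  · intro B hB
    exact sdiff_sdiff_eq_self (mem_powersetCard.mp hB).1
  · intro E hE
    exact sdiff_sdiff_eq_self (mem_powersetCard.mp hE).1

end Finset

theorem mul_sub_le_of_add_le_add_shift {R : Type*} [CommRing R] [LinearOrder R]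
    [IsStrictOrderedRing R] {g : ℕ → R} {m k : ℕ} {M : R}
    (hadd : ∀ i < m, g 0 + g (i + k) ≤ g i + g k) (hnonneg : ∀ i < k, 0 ≤ g (m + i))
    (hle : ∀ i < k, g i ≤ M) :
    m * (g 0 - g k) ≤ k * M :=
  calc (m : R) * (g 0 - g k)
      = ∑ i ∈ range m, (g 0 - g k) := by rw [sum_const, card_range, nsmul_eq_mul]
    _ ≤ ∑ i ∈ range m, (g i - g (i + k)) :=
      sum_le_sum fun i hi => by linarith [hadd i (mem_range.mp hi)]
    _ = ∑ i ∈ range k, (g i - g (m + i)) := sum_range_sub_shift g m k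
    _ ≤ ∑ i ∈ range k, M :=
      sum_le_sum fun i hi => by linarith [hnonneg i (mem_range.mp hi), hle i (mem_range.mp hi)]
    _ = k * M := by rw [sum_const, card_range, nsmul_eq_mul]

namespace Submodular

variable {α : Type*} [DecidableEq α] {f : Finset α → ℝ}

theorem add_sdiff_union_le (hf : Submodular f) (T : Finset α) {X Y : Finset α}
    (hXY : Disjoint X Y) : f T + f (T \ (X ∪ Y)) ≤ f (T \ X) + f (T \ Y) := by
  have h := hf (T \ X) (T \ Y)
  rwa [← sdiff_inter_distrib_right, ← sdiff_union_distrib, disjoint_iff_inter_eq_empty.mp hXY,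
    sdiff_empty] at h

theorem add_expect_le (hf : Submodular f) (T A : Finset α) {i k : ℕ} (hik : i + k ≤ #A) :
    f T + 𝔼 D ∈ A.powersetCard (i + k), f (T \ D) ≤
      𝔼 E ∈ A.powersetCard i, f (T \ E) + 𝔼 B ∈ A.powersetCard k, f (T \ B) := by
  have hD : ∀ D ∈ A.powersetCard (i + k), #D = i + k := fun D hD => (mem_powersetCard.mp hD).2
  calc f T + 𝔼 D ∈ A.powersetCard (i + k), f (T \ D)
      = 𝔼 D ∈ A.powersetCard (i + k), 𝔼 B ∈ D.powersetCard k, (f T + f (T \ D)) := by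
        rw [expect_congr rfl fun D hD' =>
            expect_const (powersetCard_nonempty.mpr (by rw [hD D hD']; omega)) _,
          expect_add_distrib, expect_const (powersetCard_nonempty.mpr hik)]
    _ ≤ 𝔼 D ∈ A.powersetCard (i + k), 𝔼 B ∈ D.powersetCard k, (f (T \ (D \ B)) + f (T \ B)) :=
        expect_le_expect fun D _ => expect_le_expect fun B hB => by
          simpa [sdiff_union_of_subset (mem_powersetCard.mp hB).1] using
            hf.add_sdiff_union_le T (sdiff_disjoint : Disjoint (D \ B) B)
    _ = 𝔼 D ∈ A.powersetCard (i + k), 𝔼 E ∈ D.powersetCard i, f (T \ E) +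
          𝔼 D ∈ A.powersetCard (i + k), 𝔼 B ∈ D.powersetCard k, f (T \ B) := by
        simp_rw [expect_add_distrib]
        congr 1
        refine expect_congr rfl fun D hD' => ?_
        rw [expect_powersetCard_sdiff D (by rw [hD D hD']; omega) (fun E => f (T \ E)), hD D hD',
          Nat.add_sub_cancel]
    _ = _ := by
        rw [expect_powersetCard_expect_powersetCard A (by omega) hik,
          expect_powersetCard_expect_powersetCard A (by omega) hik]

theorem add_inter_sdiff_le (hf : Submodular f) (S : Finset α) {A B : Finset α} (hB : B ⊆ A) :
    f S + f ((S ∩ A) \ B) ≤ f (S \ B) + f (S ∩ A) := by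
  have h := hf (S \ B) (S ∩ A)
  have hunion : S \ B ∪ S ∩ A = S := by grind
  have hinter : S \ B ∩ (S ∩ A) = (S ∩ A) \ B := by grind
  linarith [hunion ▸ hinter ▸ h]

end Submodular

theorem apply_sdiff_le_sSup {α : Type*} [DecidableEq α] (f : Finset α → ℝ) (T : Finset α)
    {k : ℕ} {C : Finset α} (hC : #C ≤ k) :
    f (T \ C) ≤ sSup {y : ℝ | ∃ S' : Finset α, S' ⊆ T ∧ #T - k ≤ #S' ∧ y = f S'} := by
  have hbdd : BddAbove {y : ℝ | ∃ S' : Finset α, S' ⊆ T ∧ #T - k ≤ #S' ∧ y = f S'} :=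
    ((T.powerset.finite_toSet.image f).subset <| by
      rintro _ ⟨S', hS', -, rfl⟩
      exact ⟨S', mem_powerset.mpr hS', rfl⟩).bddAbove
  refine le_csSup hbdd ⟨T \ C, sdiff_subset, ?_, rfl⟩
  have := card_le_card_sdiff_add_card (s := T) (t := C)
  omega

theorem average_removal_lower_bound_general {α : Type*} [DecidableEq α]
    (f : Finset α → ℝ) (hf0 : ∀ S : Finset α, 0 ≤ f S) (hf : Submodular f)
    (S A : Finset α) (k : ℕ) (hk : k < A.card) :
    (1 / (A.card.choose k : ℝ)) * ∑ B ∈ A.powersetCard k, f (S \ B) ≥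
      f S - ((k : ℝ) / ((A.card : ℝ) - (k : ℝ))) *
        sSup {y : ℝ | ∃ S' : Finset α, S' ⊆ S ∩ A ∧ (S ∩ A).card - k ≤ S'.card ∧ y = f S'} := by
  set T := S ∩ A
  set M := sSup {y : ℝ | ∃ S' : Finset α, S' ⊆ T ∧ #T - k ≤ #S' ∧ y = f S'}
  set g : ℕ → ℝ := fun i => 𝔼 C ∈ A.powersetCard i, f (T \ C)
  have hgM : ∀ i < k, g i ≤ M := fun i hi =>
    expect_le (powersetCard_nonempty.mpr (by omega)) fun C hC =>
      apply_sdiff_le_sSup f T ((mem_powersetCard.mp hC).2 ▸ hi.le)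
  have hg0 : g 0 = f T := by simp [g]
  have hgap_mul : ((#A - k : ℕ) : ℝ) * (f T - g k) ≤ k * M := hg0 ▸
    mul_sub_le_of_add_le_add_shift (fun i _ => hg0 ▸ hf.add_expect_le T A (by omega))
      (fun _ _ => expect_nonneg fun _ _ => hf0 _) hgM
  have hS : f S - f T + g k ≤ 𝔼 B ∈ A.powersetCard k, f (S \ B) := by
    rw [← expect_const (powersetCard_nonempty.mpr hk.le) (f S - f T), ← expect_add_distrib]
    exact expect_le_expect fun B hB => by
      linarith [hf.add_inter_sdiff_le S (mem_powersetCard.mp hB).1]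
  have hnk : (0 : ℝ) < #A - k := sub_pos.mpr (by exact_mod_cast hk)
  have hgap : f T - g k ≤ k / (#A - k) * M := by
    rw [div_mul_eq_mul_div, le_div_iff₀ hnk, ← Nat.cast_sub hk.le]
    linarith
  rw [one_div_mul_eq_div, ← card_powersetCard, ← expect_eq_sum_div_card]
  linarith

theorem average_removal_lower_bound {α : Type*} [DecidableEq α] [Fintype α]
    (f : Finset α → ℝ) (hf0 : ∀ S : Finset α, 0 ≤ f S) (hf : Submodular f)
    (S A : Finset α) (k : ℕ) (hk1 : 1 ≤ k) (hk : k < A.card) :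
    (1 / (A.card.choose k : ℝ)) * ∑ B ∈ A.powersetCard k, f (S \ B) ≥
      f S - ((k : ℝ) / ((A.card : ℝ) - (k : ℝ))) *
        sSup {y : ℝ | ∃ S' : Finset α, S' ⊆ S ∩ A ∧ (S ∩ A).card - k ≤ S'.card ∧ y = f S'} :=
  average_removal_lower_bound_general f hf0 hf S A k hk
end

section
/- Let f : 2^N → ℝ be a non-negative submodular function on a finite ground set N, let S, A ⊆ N, and let k be an integer with 1 ≤ k < |A|. Then the average over all size-k subsets B of A satisfies (1/binom(|A|,k)) · Σ_{B ⊆ A, |B| = k} f(S ∪ B) ≥ f(S) − (k/(|A| − k)) · max{ f(S') : S ⊆ S' ⊆ S ∪ A }. -/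
/-!
Put `T j := ∑_{B ⊆ A, |B| = j} f (S ∪ B)`. Adding the elements of `A \ B` one at a time to
`S ∪ B` and applying submodularity at each step gives
`∑_{c ∈ A \ B} f (S ∪ B ∪ {c}) ≥ (|A| - |B| - 1) f (S ∪ B)`; summing over `B` and double counting
yields `(j + 1) T (j + 1) ≥ (|A| - j - 1) T j`, hence `T k ≥ binom(|A| - 1, k) f S`. As
`binom(|A| - 1, k) / binom(|A|, k) = 1 - k / |A|`, the average is at least `(1 - k / |A|) f S`;
finally `k / |A| ≤ k / (|A| - k)` and `f S ≤ max`.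
-/

open Finset

section DoubleCounting

variable {α M : Type*} [DecidableEq α] [AddCommMonoid M]

theorem sum_powersetCard_sum_sdiff_insert (A : Finset α) (j : ℕ) (g : Finset α → M) :
    ∑ B ∈ A.powersetCard j, ∑ c ∈ A \ B, g (insert c B) =
      (j + 1) • ∑ C ∈ A.powersetCard (j + 1), g C := by
  have hconst : ∀ C ∈ A.powersetCard (j + 1), (j + 1) • g C = ∑ _c ∈ C, g C :=
    fun C hC => by rw [sum_const, (mem_powersetCard.mp hC).2]
  rw [smul_sum, sum_congr rfl hconst, sum_sigma', sum_sigma']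
  refine sum_bij' (fun p _ => ⟨insert p.2 p.1, p.2⟩) (fun p _ => ⟨p.1.erase p.2, p.2⟩)
    ?_ ?_ ?_ ?_ (fun _ _ => rfl)
  · rintro ⟨B, c⟩ hp
    simp only [mem_sigma, mem_powersetCard, mem_sdiff] at hp ⊢
    obtain ⟨⟨hBA, rfl⟩, hcA, hcB⟩ := hp
    exact ⟨⟨insert_subset hcA hBA, card_insert_of_notMem hcB⟩, mem_insert_self _ _⟩
  · rintro ⟨C, c⟩ hp
    simp only [mem_sigma, mem_powersetCard, mem_sdiff] at hp ⊢
    obtain ⟨⟨hCA, hC⟩, hcC⟩ := hp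
    refine ⟨⟨(erase_subset _ _).trans hCA, ?_⟩, hCA hcC, notMem_erase _ _⟩
    rw [card_erase_of_mem hcC, hC, Nat.add_sub_cancel]
  · rintro ⟨B, c⟩ hp
    simp only [mem_sigma, mem_sdiff] at hp
    simp [erase_insert hp.2.2]
  · rintro ⟨C, c⟩ hp
    simp only [mem_sigma] at hp
    simp [insert_erase hp.2]

end DoubleCounting

namespace Submodular

variable {α : Type*} [DecidableEq α] {f : Finset α → ℝ}

theorem add_card_sub_one_mul_le_sum_insert (hf : Submodular f) (X C : Finset α) :
    f (X ∪ C) + ((#C : ℝ) - 1) * f X ≤ ∑ c ∈ C, f (insert c X) := by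
  induction C using Finset.induction_on with
  | empty => simp
  | @insert c C hc ih =>
    have hinter : insert c X ∩ (X ∪ C) = X := by
      ext x
      simp only [mem_inter, mem_insert, mem_union]
      constructor
      · rintro ⟨rfl | hx, hx' | hx'⟩ <;> first | assumption | exact absurd hx' hc
      · exact fun hx => ⟨Or.inr hx, Or.inl hx⟩
    have hunion : insert c X ∪ (X ∪ C) = X ∪ insert c C := by
      rw [insert_union, ← union_assoc, union_self, union_insert]
    have hsub := hf (insert c X) (X ∪ C)
    rw [hinter, hunion] at hsub
    rw [sum_insert hc, card_insert_of_notMem hc, Nat.cast_succ]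
    linarith

theorem card_sub_one_mul_le_sum_insert (hf0 : ∀ S, 0 ≤ f S) (hf : Submodular f)
    (X C : Finset α) : ((#C - 1 : ℕ) : ℝ) * f X ≤ ∑ c ∈ C, f (insert c X) := by
  rcases C.eq_empty_or_nonempty with rfl | hC
  · simp
  rw [Nat.cast_sub hC.card_pos, Nat.cast_one]
  linarith [hf.add_card_sub_one_mul_le_sum_insert X C, hf0 (X ∪ C)]

theorem card_sub_mul_sum_powersetCard_le (hf0 : ∀ S, 0 ≤ f S) (hf : Submodular f)
    (S A : Finset α) (j : ℕ) :
    ((#A - (j + 1) : ℕ) : ℝ) * ∑ B ∈ A.powersetCard j, f (S ∪ B) ≤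
      (j + 1) * ∑ B ∈ A.powersetCard (j + 1), f (S ∪ B) := by
  have hcount := sum_powersetCard_sum_sdiff_insert A j (fun B => f (S ∪ B))
  rw [nsmul_eq_mul, Nat.cast_succ] at hcount
  rw [← hcount, mul_sum]
  refine sum_le_sum fun B hB => ?_
  obtain ⟨hBA, hB⟩ := mem_powersetCard.mp hB
  have hcard : #(A \ B) - 1 = #A - (j + 1) := by rw [card_sdiff_of_subset hBA, hB]; omega
  simpa only [hcard, union_insert] using hf.card_sub_one_mul_le_sum_insert hf0 (S ∪ B) (A \ B)

theorem choose_card_sub_one_mul_le_sum_powersetCard (hf0 : ∀ S, 0 ≤ f S) (hf : Submodular f)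
    (S A : Finset α) (k : ℕ) :
    ((#A - 1).choose k : ℝ) * f S ≤ ∑ B ∈ A.powersetCard k, f (S ∪ B) := by
  induction k with
  | zero => simp
  | succ j ih =>
    have hchoose : ((#A - 1).choose (j + 1) : ℝ) * (j + 1) =
        (#A - 1).choose j * ((#A - (j + 1) : ℕ) : ℝ) := by
      rw [show #A - (j + 1) = #A - 1 - j by omega]
      exact_mod_cast Nat.choose_succ_right_eq (#A - 1) j
    refine le_of_mul_le_mul_left ?_ (Nat.cast_add_one_pos j)
    calc ((j : ℝ) + 1) * ((#A - 1).choose (j + 1) * f S)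
        = ((#A - (j + 1) : ℕ) : ℝ) * ((#A - 1).choose j * f S) := by
          linear_combination f S * hchoose
      _ ≤ ((#A - (j + 1) : ℕ) : ℝ) * ∑ B ∈ A.powersetCard j, f (S ∪ B) := by gcongr
      _ ≤ (j + 1) * ∑ B ∈ A.powersetCard (j + 1), f (S ∪ B) :=
          hf.card_sub_mul_sum_powersetCard_le hf0 S A j

theorem one_sub_div_card_mul_le_average (hf0 : ∀ S, 0 ≤ f S) (hf : Submodular f)
    (S A : Finset α) {k : ℕ} (hk : k ≤ #A) :
    (1 - (k : ℝ) / #A) * f S ≤ (1 / ((#A).choose k : ℝ)) * ∑ B ∈ A.powersetCard k, f (S ∪ B) := by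
  have hratio : (1 - (k : ℝ) / #A) * (#A).choose k = (#A - 1).choose k := by
    rcases hA : #A with _ | m
    · simp_all
    rw [hA] at hk
    have hm := Nat.choose_mul_succ_eq m k
    rw [Nat.add_sub_cancel]
    field_simp
    rw [← Nat.cast_sub hk]
    exact_mod_cast by linarith [hm]
  rw [one_div_mul_eq_div, le_div_iff₀ (Nat.cast_pos.mpr (Nat.choose_pos hk))]
  calc (1 - (k : ℝ) / #A) * f S * (#A).choose k = (#A - 1).choose k * f S := by
        rw [← hratio]; ring
    _ ≤ ∑ B ∈ A.powersetCard k, f (S ∪ B) :=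
        hf.choose_card_sub_one_mul_le_sum_powersetCard hf0 S A k

end Submodular

theorem average_addition_lower_bound_general {α : Type*} [DecidableEq α]
    (f : Finset α → ℝ) (hf0 : ∀ S : Finset α, 0 ≤ f S) (hf : Submodular f)
    (S A : Finset α) (k : ℕ) (hk : k < A.card) :
    (1 / (A.card.choose k : ℝ)) * ∑ B ∈ A.powersetCard k, f (S ∪ B) ≥
      f S - ((k : ℝ) / ((A.card : ℝ) - (k : ℝ))) *
        sSup {y : ℝ | ∃ S' : Finset α, S ⊆ S' ∧ S' ⊆ S ∪ A ∧ y = f S'} := by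
  set M := sSup {y : ℝ | ∃ S' : Finset α, S ⊆ S' ∧ S' ⊆ S ∪ A ∧ y = f S'}
  have hbdd : BddAbove {y : ℝ | ∃ S' : Finset α, S ⊆ S' ∧ S' ⊆ S ∪ A ∧ y = f S'} := by
    refine (((S ∪ A).powerset.image f).finite_toSet.subset ?_).bddAbove
    rintro _ ⟨S', -, hS', rfl⟩
    exact mem_image_of_mem f (mem_powerset.mpr hS')
  have hSM : f S ≤ M := le_csSup hbdd ⟨S, Subset.rfl, subset_union_left, rfl⟩
  have hkA : (k : ℝ) < #A := Nat.cast_lt.mpr hk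
  have hloss : (k : ℝ) / #A * f S ≤ k / (#A - k) * M :=
    mul_le_mul (div_le_div_of_nonneg_left k.cast_nonneg (sub_pos.mpr hkA) (by linarith)) hSM
      (hf0 S) (div_nonneg k.cast_nonneg (sub_pos.mpr hkA).le)
  have havg := hf.one_sub_div_card_mul_le_average hf0 S A hk.le
  linarith

theorem average_addition_lower_bound {α : Type*} [DecidableEq α] [Fintype α]
    (f : Finset α → ℝ) (hf0 : ∀ S : Finset α, 0 ≤ f S) (hf : Submodular f)
    (S A : Finset α) (k : ℕ) (hk1 : 1 ≤ k) (hk : k < A.card) :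
    (1 / (A.card.choose k : ℝ)) * ∑ B ∈ A.powersetCard k, f (S ∪ B) ≥
      f S - ((k : ℝ) / ((A.card : ℝ) - (k : ℝ))) *
        sSup {y : ℝ | ∃ S' : Finset α, S ⊆ S' ∧ S' ⊆ S ∪ A ∧ y = f S'} :=
  average_addition_lower_bound_general f hf0 hf S A k hk
end

section
/- (Smoothing lemma, monotone case.) Let M be a matroid on a finite ground set N with family of independent sets 𝓘 and rank r, let f : 2^N → ℝ be a non-negative monotone submodular function, let O* ∈ argmax_{S ∈ 𝓘} f(S), let B₀ be any basis of M, and let h, t be integers with 1 ≤ t ≤ h < r. Then the average over all size-h subsets H of B₀ satisfies (1/binom(r,h)) · Σ_{H ⊆ B₀, |H| = h} max{ F^{H,t}(S) : S ⊆ N \ H, S ∪ H ∈ 𝓘 } ≥ (1 − h/(r − h)) · f(O*). -/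
open Finset

/-- A set function is monotone. -/
def MonotoneSetFun {α : Type*} [DecidableEq α] (f : Finset α → ℝ) : Prop :=
  ∀ A B : Finset α, A ⊆ B → f A ≤ f B

/-- The surrogate function `F^{H,t}(S) = (1/binom(|H|,t)) · Σ_{H' ⊆ H, |H'| = t} f (S ∪ H')`. -/
noncomputable def surrogate {α : Type*} [DecidableEq α] (f : Finset α → ℝ)
    (H : Finset α) (t : ℕ) (S : Finset α) : ℝ :=
  (1 / (H.card.choose t : ℝ)) * ∑ H' ∈ H.powersetCard t, f (S ∪ H')

section Aux
variable {α : Type*} [DecidableEq α]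

lemma marg_mono {f : Finset α → ℝ} (hf : Submodular f) {X Y : Finset α} {e : α}
    (hXY : X ⊆ Y) (he : e ∉ Y) : f (insert e Y) - f Y ≤ f (insert e X) - f X := by
  have hsub := hf (insert e X) Y
  have h1 : insert e X ∪ Y = insert e Y := by
    rw [insert_union, union_eq_right.mpr hXY]
  have h2 : insert e X ∩ Y = X := by
    ext x
    simp only [mem_inter, mem_insert]
    constructor
    · rintro ⟨(rfl | hx), hy⟩
      · exact absurd hy he
      · exact hx
    · intro hx; exact ⟨Or.inr hx, hXY hx⟩
  rw [h1, h2] at hsub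
  linarith

noncomputable def gpick (f : Finset α → ℝ) (T s : Finset α) (hs : s.Nonempty) : α :=
  (Finset.exists_max_image s (fun e => f (insert e T)) hs).choose

lemma gpick_mem (f : Finset α → ℝ) (T s : Finset α) (hs : s.Nonempty) :
    gpick f T s hs ∈ s :=
  (Finset.exists_max_image s (fun e => f (insert e T)) hs).choose_spec.1

lemma gpick_max (f : Finset α → ℝ) (T s : Finset α) (hs : s.Nonempty) :
    ∀ e ∈ s, f (insert e T) ≤ f (insert (gpick f T s hs) T) :=
  (Finset.exists_max_image s (fun e => f (insert e T)) hs).choose_spec.2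

noncomputable def gT (f : Finset α → ℝ) (O : Finset α) : ℕ → Finset α
  | 0 => ∅
  | i + 1 =>
    if hs : (O \ gT f O i).Nonempty then
      insert (gpick f (gT f O i) (O \ gT f O i) hs) (gT f O i)
    else gT f O i

noncomputable def gE (f : Finset α → ℝ) (O : Finset α) (a₀ : α) (i : ℕ) : α :=
  if hs : (O \ gT f O i).Nonempty then gpick f (gT f O i) (O \ gT f O i) hs else a₀

lemma gT_succ (f : Finset α → ℝ) (O : Finset α) (a₀ : α) (i : ℕ)
    (hs : (O \ gT f O i).Nonempty) :
    gT f O (i + 1) = insert (gE f O a₀ i) (gT f O i) := by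
  rw [gT, gE, dif_pos hs, dif_pos hs]

lemma gE_mem (f : Finset α → ℝ) (O : Finset α) (a₀ : α) (i : ℕ)
    (hs : (O \ gT f O i).Nonempty) :
    gE f O a₀ i ∈ O \ gT f O i := by
  rw [gE, dif_pos hs]; exact gpick_mem _ _ _ _

lemma gE_max (f : Finset α → ℝ) (O : Finset α) (a₀ : α) (i : ℕ)
    (hs : (O \ gT f O i).Nonempty) :
    ∀ e ∈ O \ gT f O i, f (insert e (gT f O i)) ≤ f (insert (gE f O a₀ i) (gT f O i)) := by
  rw [gE, dif_pos hs]; exact gpick_max _ _ _ _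

lemma gT_subset (f : Finset α → ℝ) (O : Finset α) : ∀ i, gT f O i ⊆ O := by
  intro i
  induction i with
  | zero => simp [gT]
  | succ i ih =>
    rw [gT]
    split
    · next hs => exact insert_subset (mem_sdiff.1 (gpick_mem _ _ _ hs)).1 ih
    · exact ih

lemma gT_mono_succ (f : Finset α → ℝ) (O : Finset α) (i : ℕ) : gT f O i ⊆ gT f O (i + 1) := by
  rw [gT]
  split
  · exact subset_insert _ _
  · exact Subset.rfl

lemma gT_mono (f : Finset α → ℝ) (O : Finset α) {i j : ℕ} (hij : i ≤ j) :
    gT f O i ⊆ gT f O j := by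
  induction j with
  | zero => simpa [Nat.le_zero.1 hij]
  | succ j ih =>
    rcases Nat.lt_or_ge i (j+1) with hlt | hge
    · exact (ih (Nat.lt_succ_iff.1 hlt)).trans (gT_mono_succ f O j)
    · have : i = j + 1 := le_antisymm hij hge
      subst this; exact Subset.rfl

lemma gT_card (f : Finset α → ℝ) (O : Finset α) : ∀ i, i ≤ O.card → (gT f O i).card = i := by
  intro i
  induction i with
  | zero => simp [gT]
  | succ i ih =>
    intro hi
    have hci : (gT f O i).card = i := ih (Nat.le_of_succ_le hi)
    have hs : (O \ gT f O i).Nonempty := by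
      rw [← Finset.card_pos, card_sdiff_of_subset (gT_subset f O i), hci]
      omega
    rw [gT, dif_pos hs, card_insert_of_notMem (mem_sdiff.1 (gpick_mem _ _ _ hs)).2, hci]

lemma gT_nonempty_sdiff (f : Finset α → ℝ) (O : Finset α) {i : ℕ} (hi : i < O.card) :
    (O \ gT f O i).Nonempty := by
  rw [← Finset.card_pos, card_sdiff_of_subset (gT_subset f O i), gT_card f O i (le_of_lt hi)]
  omega

lemma gT_top (f : Finset α → ℝ) (O : Finset α) : gT f O O.card = O :=
  Finset.eq_of_subset_of_card_le (gT_subset f O _)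
    (by rw [gT_card f O _ le_rfl])

end Aux

section Aux2
variable {α : Type*} [DecidableEq α]

lemma w_nonneg {f : Finset α → ℝ} (hmono : MonotoneSetFun f) (O : Finset α) (i : ℕ) :
    0 ≤ f (gT f O (i + 1)) - f (gT f O i) :=
  sub_nonneg.2 (hmono _ _ (gT_mono_succ f O i))

lemma w_antitone {f : Finset α → ℝ} (hf : Submodular f) (O : Finset α) (a₀ : α) {i : ℕ}
    (hi : i + 1 < O.card) :
    f (gT f O (i + 2)) - f (gT f O (i + 1)) ≤ f (gT f O (i + 1)) - f (gT f O i) := by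
  have hs1 : (O \ gT f O (i+1)).Nonempty := gT_nonempty_sdiff f O hi
  have hs0 : (O \ gT f O i).Nonempty := gT_nonempty_sdiff f O (Nat.lt_of_succ_lt hi)
  have he1 := gE_mem f O a₀ (i+1) hs1
  rw [mem_sdiff] at he1
  have step1 : f (gT f O (i + 2)) - f (gT f O (i + 1))
      ≤ f (insert (gE f O a₀ (i+1)) (gT f O i)) - f (gT f O i) := by
    rw [gT_succ f O a₀ (i+1) hs1]
    exact marg_mono hf (gT_mono_succ f O i) he1.2
  have he1' : gE f O a₀ (i+1) ∈ O \ gT f O i := by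
    rw [mem_sdiff]
    exact ⟨he1.1, fun hc => he1.2 (gT_mono_succ f O i hc)⟩
  have step2 := gE_max f O a₀ i hs0 _ he1'
  rw [gT_succ f O a₀ i hs0] at step1 ⊢
  linarith

lemma w_sum {f : Finset α → ℝ} (O : Finset α) (n : ℕ) :
    ∑ i ∈ range n, (f (gT f O (i + 1)) - f (gT f O i)) = f (gT f O n) - f ∅ := by
  rw [Finset.sum_range_sub (fun i => f (gT f O i)) n]
  rfl

lemma lost_sum {f : Finset α → ℝ} (hf : Submodular f) (O S : Finset α) (a₀ : α)
    (hS : S ⊆ O) :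
    f O ≤ f S + ∑ i ∈ range O.card,
      (if gE f O a₀ i ∈ S then 0 else f (gT f O (i + 1)) - f (gT f O i)) := by
  have key : ∀ j, j ≤ O.card → f (gT f O j ∪ S) ≤ f S + ∑ i ∈ range j,
      (if gE f O a₀ i ∈ S then 0 else f (gT f O (i + 1)) - f (gT f O i)) := by
    intro j
    induction j with
    | zero => simp [gT]
    | succ j ih =>
      intro hj
      have hj' : j < O.card := hj
      have ihj := ih (le_of_lt hj')
      have hs : (O \ gT f O j).Nonempty := gT_nonempty_sdiff f O hj'
      have hgE := gE_mem f O a₀ j hs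
      rw [mem_sdiff] at hgE
      rw [Finset.sum_range_succ, gT_succ f O a₀ j hs, insert_union]
      by_cases hmem : gE f O a₀ j ∈ S
      · rw [if_pos hmem, insert_eq_self.mpr (mem_union_right _ hmem)]
        linarith
      · rw [if_neg hmem]
        have hnm : gE f O a₀ j ∉ gT f O j ∪ S := by
          rw [mem_union]; rintro (hc | hc)
          exacts [hgE.2 hc, hmem hc]
        have := marg_mono hf (subset_union_left (s₁ := gT f O j) (s₂ := S)) hnm
        linarith
  have := key O.card le_rfl
  rwa [gT_top, union_eq_left.mpr hS] at this
end Aux2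

section Aux3
variable {α : Type*} [DecidableEq α]

def gA (𝓘 : Finset (Finset α)) (H : Finset α) (o : ℕ → α) : ℕ → Finset α
  | 0 => ∅
  | i + 1 =>
    if H ∪ insert (o i) (gA 𝓘 H o i) ∈ 𝓘 then insert (o i) (gA 𝓘 H o i) else gA 𝓘 H o i

lemma gA_mono_succ (𝓘 : Finset (Finset α)) (H : Finset α) (o : ℕ → α) (i : ℕ) :
    gA 𝓘 H o i ⊆ gA 𝓘 H o (i + 1) := by
  rw [gA]; split
  · exact subset_insert _ _
  · exact Subset.rfl

lemma gA_mono (𝓘 : Finset (Finset α)) (H : Finset α) (o : ℕ → α) {i j : ℕ} (hij : i ≤ j) :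
    gA 𝓘 H o i ⊆ gA 𝓘 H o j := by
  induction j with
  | zero => simp [Nat.le_zero.1 hij]
  | succ j ih =>
    rcases Nat.lt_or_ge i (j+1) with hlt | hge
    · exact (ih (Nat.lt_succ_iff.1 hlt)).trans (gA_mono_succ 𝓘 H o j)
    · have : i = j + 1 := le_antisymm hij hge
      subst this; exact Subset.rfl

lemma gA_indep (𝓘 : Finset (Finset α)) (hdown : ∀ A ∈ 𝓘, ∀ B ⊆ A, B ∈ 𝓘)
    (H : Finset α) (hH : H ∈ 𝓘) (o : ℕ → α) : ∀ i, H ∪ gA 𝓘 H o i ∈ 𝓘 := by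
  intro i
  induction i with
  | zero => simpa [gA]
  | succ i ih =>
    rw [gA]
    split
    · next hc => exact hc
    · exact ih

lemma gA_subset_gT {f : Finset α → ℝ} (𝓘 : Finset (Finset α)) (H O : Finset α) (a₀ : α) :
    ∀ i, i ≤ O.card → gA 𝓘 H (gE f O a₀) i ⊆ gT f O i := by
  intro i
  induction i with
  | zero => simp [gA]
  | succ i ih =>
    intro hi
    have hs : (O \ gT f O i).Nonempty := gT_nonempty_sdiff f O hi
    rw [gA, gT_succ f O a₀ i hs]
    split
    · exact insert_subset_insert _ (ih (Nat.le_of_succ_le hi))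
    · exact (ih (Nat.le_of_succ_le hi)).trans (subset_insert _ _)

lemma gA_rejected {f : Finset α → ℝ} (𝓘 : Finset (Finset α))
    (hdown : ∀ A ∈ 𝓘, ∀ B ⊆ A, B ∈ 𝓘) (H O : Finset α) (a₀ : α) :
    ∀ i, i ≤ O.card → ∀ e ∈ gT f O i, e ∉ gA 𝓘 H (gE f O a₀) i →
      H ∪ insert e (gA 𝓘 H (gE f O a₀) i) ∉ 𝓘 := by
  intro i
  induction i with
  | zero => simp [gT]
  | succ i ih =>
    intro hi e he hne
    have hs : (O \ gT f O i).Nonempty := gT_nonempty_sdiff f O hi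
    rw [gT_succ f O a₀ i hs, mem_insert] at he
    rw [gA] at hne ⊢
    by_cases hacc : H ∪ insert (gE f O a₀ i) (gA 𝓘 H (gE f O a₀) i) ∈ 𝓘
    · rw [if_pos hacc] at hne ⊢
      have hei : e ≠ gE f O a₀ i := fun hc => hne (hc ▸ mem_insert_self _ _)
      have he' : e ∈ gT f O i := he.resolve_left hei
      have hne' : e ∉ gA 𝓘 H (gE f O a₀) i := fun hc => hne (mem_insert_of_mem hc)
      intro hc
      exact ih (Nat.le_of_succ_le hi) e he' hne'
        (hdown _ hc _ (union_subset_union Subset.rfl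
          (insert_subset_insert _ (subset_insert _ _))))
    · rw [if_neg hacc] at hne ⊢
      rcases he with rfl | he'
      · exact hacc
      · exact ih (Nat.le_of_succ_le hi) e he' hne

lemma gA_max {f : Finset α → ℝ} (𝓘 : Finset (Finset α))
    (hdown : ∀ A ∈ 𝓘, ∀ B ⊆ A, B ∈ 𝓘)
    (hexch : ∀ A ∈ 𝓘, ∀ B ∈ 𝓘, A.card < B.card → ∃ e ∈ B \ A, insert e A ∈ 𝓘)
    (H O : Finset α) (a₀ : α) (hH : H ∈ 𝓘) {i : ℕ} (hi : i ≤ O.card)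
    {I : Finset α} (hI : I ∈ 𝓘) (hIsub : I ⊆ H ∪ gT f O i) :
    I.card ≤ (H ∪ gA 𝓘 H (gE f O a₀) i).card := by
  by_contra hlt
  push_neg at hlt
  obtain ⟨e, he, hins⟩ := hexch _ (gA_indep 𝓘 hdown H hH (gE f O a₀) i) _ hI hlt
  rw [mem_sdiff, mem_union, not_or] at he
  obtain ⟨heI, heH, heA⟩ := he
  have heT : e ∈ gT f O i := by
    rcases mem_union.1 (hIsub heI) with hc | hc
    · exact absurd hc heH
    · exact hc
  have := gA_rejected 𝓘 hdown H O a₀ i hi e heT heA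
  rw [← union_insert] at hins
  exact this hins

end Aux3

section Aux4
variable {α : Type*} [DecidableEq α]

lemma extend_indep (𝓘 : Finset (Finset α))
    (hexch : ∀ A ∈ 𝓘, ∀ B ∈ 𝓘, A.card < B.card → ∃ e ∈ B \ A, insert e A ∈ 𝓘)
    (B₀ : Finset α) (hB₀ : B₀ ∈ 𝓘) (r : ℕ) (hB₀c : B₀.card = r) :
    ∀ k (A : Finset α), A ∈ 𝓘 → A.card + k = r →
      ∃ C, C ⊆ B₀ ∧ Disjoint C A ∧ A ∪ C ∈ 𝓘 ∧ C.card = k := by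
  intro k
  induction k with
  | zero =>
    intro A hA _
    exact ⟨∅, empty_subset _, disjoint_empty_left _, by rwa [union_empty], rfl⟩
  | succ k ih =>
    intro A hA hcard
    have hlt : A.card < B₀.card := by omega
    obtain ⟨e, he, hins⟩ := hexch A hA B₀ hB₀ hlt
    rw [mem_sdiff] at he
    have hc' : (insert e A).card + k = r := by
      rw [card_insert_of_notMem he.2]; omega
    obtain ⟨C, hCB, hCd, hCi, hCc⟩ := ih (insert e A) hins hc'
    have heC : e ∉ C := by
      intro hc
      exact (disjoint_left.1 hCd hc) (mem_insert_self _ _)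
    refine ⟨insert e C, insert_subset he.1 hCB, ?_, ?_, ?_⟩
    · rw [disjoint_left]
      intro x hx
      rcases mem_insert.1 hx with rfl | hx'
      · exact he.2
      · exact fun hc => disjoint_left.1 hCd hx' (mem_insert_of_mem hc)
    · have : A ∪ insert e C = insert e A ∪ C := by
        rw [union_insert, insert_union]
      rw [this]; exact hCi
    · rw [card_insert_of_notMem heC, hCc]

lemma count_mem_powersetCard (B₀ : Finset α) (r hh : ℕ) (hB₀c : B₀.card = r) (hh1 : 1 ≤ hh)
    (b : α) (hb : b ∈ B₀) :
    ((B₀.powersetCard hh).filter (fun H => b ∈ H)).card = (r - 1).choose (hh - 1) := by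
  have hrw : (r - 1).choose (hh - 1) = ((B₀.erase b).powersetCard (hh - 1)).card := by
    rw [card_powersetCard, card_erase_of_mem hb, hB₀c]
  rw [hrw]
  apply Finset.card_bij' (fun H _ => H.erase b) (fun K _ => insert b K)
  · intro H hH
    rw [mem_filter] at hH
    exact insert_erase hH.2
  · intro K hK
    rw [mem_powersetCard] at hK
    exact erase_insert (fun hc => (mem_erase.1 (hK.1 hc)).1 rfl)
  · intro H hH
    rw [mem_filter, mem_powersetCard] at hH
    rw [mem_powersetCard]
    refine ⟨erase_subset_erase _ hH.1.1, ?_⟩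
    rw [card_erase_of_mem hH.2, hH.1.2]
  · intro K hK
    rw [mem_powersetCard] at hK
    have hbK : b ∉ K := fun hc => (mem_erase.1 (hK.1 hc)).1 rfl
    rw [mem_filter, mem_powersetCard]
    refine ⟨⟨insert_subset hb (hK.1.trans (erase_subset _ _)), ?_⟩, mem_insert_self _ _⟩
    rw [card_insert_of_notMem hbK, hK.2]
    omega

lemma sum_inter_card (B₀ C : Finset α) (r hh : ℕ) (hB₀c : B₀.card = r) (hh1 : 1 ≤ hh)
    (hC : C ⊆ B₀) :
    ∑ H ∈ B₀.powersetCard hh, (H ∩ C).card = C.card * (r - 1).choose (hh - 1) := by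
  have hpt : ∀ H ∈ B₀.powersetCard hh, (H ∩ C).card = ∑ b ∈ C, if b ∈ H then 1 else 0 := by
    intro H _
    rw [← Finset.card_filter]
    congr 1
    rw [Finset.filter_mem_eq_inter, inter_comm]
  rw [Finset.sum_congr rfl hpt, Finset.sum_comm]
  rw [← Finset.sum_attach C (fun b => ∑ H ∈ B₀.powersetCard hh, if b ∈ H then 1 else 0)]
  have : ∀ b : {x // x ∈ C}, (∑ H ∈ B₀.powersetCard hh, if (b : α) ∈ H then 1 else 0)
      = (r-1).choose (hh-1) := by
    intro b
    rw [← Finset.card_filter]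
    exact count_mem_powersetCard B₀ r hh hB₀c hh1 b (hC b.2)
  rw [Finset.sum_congr rfl (fun b _ => this b), Finset.sum_const, card_attach,
    smul_eq_mul]

lemma abel_bound (w q : ℕ → ℝ) (c : ℝ) (r : ℕ) (hc : 0 ≤ c)
    (hw0 : ∀ i, 0 ≤ w i)
    (hwa : ∀ i, i + 1 < r → w (i + 1) ≤ w i)
    (hq0 : ∀ i, 0 ≤ q i)
    (hQ : ∀ j, j ≤ r → ∑ i ∈ range j, q i ≤ c * j) :
    ∑ i ∈ range r, w i * q i ≤ c * ∑ i ∈ range r, w i := by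
  set W : ℕ → ℝ := fun i => if i < r then w i else 0 with hW
  set Q : ℕ → ℝ := fun i => if i < r then q i else 0 with hQdef
  have hWa : ∀ i, W (i + 1) ≤ W i := by
    intro i
    simp only [hW]
    split
    · next h1 =>
      rw [if_pos (Nat.lt_of_succ_lt h1)]
      exact hwa i h1
    · split
      · next h2 => exact hw0 i
      · exact le_rfl
  have hW0 : ∀ i, 0 ≤ W i := by
    intro i; simp only [hW]; split; exacts [hw0 i, le_rfl]
  have hQpre : ∀ n : ℕ, ∑ i ∈ range n, Q i ≤ c * n := by
    intro n
    rcases le_or_gt n r with hn | hn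
    · calc ∑ i ∈ range n, Q i = ∑ i ∈ range n, q i := by
            apply Finset.sum_congr rfl
            intro i hi
            rw [mem_range] at hi
            simp only [hQdef]
            rw [if_pos (lt_of_lt_of_le hi hn)]
        _ ≤ c * n := hQ n hn
    · calc ∑ i ∈ range n, Q i = ∑ i ∈ range r, Q i := by
            rw [← Finset.sum_range_add_sum_Ico _ (le_of_lt hn)]
            have : ∑ i ∈ Finset.Ico r n, Q i = 0 := by
              apply Finset.sum_eq_zero
              intro i hi
              rw [Finset.mem_Ico] at hi
              simp only [hQdef]
              rw [if_neg (by omega)]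
            linarith
        _ ≤ c * r := by
            calc ∑ i ∈ range r, Q i = ∑ i ∈ range r, q i := by
                  apply Finset.sum_congr rfl
                  intro i hi
                  rw [mem_range] at hi
                  simp only [hQdef]; rw [if_pos hi]
              _ ≤ c * r := hQ r le_rfl
        _ ≤ c * n := by
            apply mul_le_mul_of_nonneg_left _ hc
            exact_mod_cast le_of_lt hn
  have main : ∀ n : ℕ, ∑ i ∈ range n, W i * Q i + W n * (c * n - ∑ i ∈ range n, Q i)
      ≤ c * ∑ i ∈ range n, W i := by
    intro n
    induction n with
    | zero => simp
    | succ n ih =>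
      rw [Finset.sum_range_succ, Finset.sum_range_succ (f := Q), Finset.sum_range_succ (f := W)]
      have key : 0 ≤ (W n - W (n + 1)) * (c * (n+1) - (∑ i ∈ range n, Q i + Q n)) := by
        apply mul_nonneg (sub_nonneg.2 (hWa n))
        have := hQpre (n+1)
        rw [Finset.sum_range_succ] at this
        push_cast at this ⊢
        linarith
      push_cast at key ⊢
      nlinarith [ih]
  have := main r
  have hWr : W r = 0 := by simp [hW]
  rw [hWr] at this
  calc ∑ i ∈ range r, w i * q i = ∑ i ∈ range r, W i * Q i := by
        apply Finset.sum_congr rfl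
        intro i hi
        rw [mem_range] at hi
        simp only [hW, hQdef, if_pos hi]
    _ ≤ c * ∑ i ∈ range r, W i := by linarith
    _ = c * ∑ i ∈ range r, w i := by
        congr 1
        apply Finset.sum_congr rfl
        intro i hi
        rw [mem_range] at hi
        simp only [hW, if_pos hi]

end Aux4

section Aux5
variable {α : Type*} [DecidableEq α]

lemma lost_card_eq (f : Finset α → ℝ) (O : Finset α) (a₀ : α) (X : Finset α) :
    ∀ j, j ≤ O.card →
      (gT f O j \ X).card = ∑ i ∈ range j, (if gE f O a₀ i ∈ X then 0 else 1) := by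
  intro j
  induction j with
  | zero => simp [gT]
  | succ j ih =>
    intro hj
    have hj' : j < O.card := hj
    have hs : (O \ gT f O j).Nonempty := gT_nonempty_sdiff f O hj'
    have hgE := gE_mem f O a₀ j hs
    rw [mem_sdiff] at hgE
    rw [Finset.sum_range_succ, ← ih (le_of_lt hj'), gT_succ f O a₀ j hs]
    by_cases hmem : gE f O a₀ j ∈ X
    · rw [if_pos hmem, insert_sdiff_of_mem _ hmem]
      omega
    · rw [if_neg hmem, insert_sdiff_of_notMem _ hmem,
        card_insert_of_notMem (fun hc => hgE.2 (mem_sdiff.1 hc).1)]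

lemma perH_bound (𝓘 : Finset (Finset α))
    (hdown : ∀ A ∈ 𝓘, ∀ B ⊆ A, B ∈ 𝓘)
    (hexch : ∀ A ∈ 𝓘, ∀ B ∈ 𝓘, A.card < B.card → ∃ e ∈ B \ A, insert e A ∈ 𝓘)
    (f : Finset α → ℝ) (O : Finset α) (a₀ : α) (H : Finset α) (hH : H ∈ 𝓘)
    {j : ℕ} (hj : j ≤ O.card) (Bj : Finset α)
    (hBd : Disjoint Bj (gT f O j)) (hBi : gT f O j ∪ Bj ∈ 𝓘) :
    (gT f O j \ (gA 𝓘 H (gE f O a₀) O.card \ H)).card + (H ∩ Bj).card ≤ H.card := by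
  set o := gE f O a₀
  set Aj := gA 𝓘 H o j with hAj
  have hAjT : Aj ⊆ gT f O j := gA_subset_gT 𝓘 H O a₀ j hj
  have hsub1 : gT f O j \ (gA 𝓘 H o O.card \ H) ⊆ gT f O j \ (Aj \ H) := by
    apply sdiff_subset_sdiff Subset.rfl
    exact sdiff_subset_sdiff (gA_mono 𝓘 H o hj) Subset.rfl
  have hAjH : Aj \ H ⊆ gT f O j := sdiff_subset.trans hAjT
  have h3 : (gT f O j \ (Aj \ H)).card = j - (Aj \ H).card := by
    rw [card_sdiff_of_subset hAjH, gT_card f O j hj]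
  have h4 : (Aj \ H).card ≤ j := by
    calc (Aj \ H).card ≤ (gT f O j).card := card_le_card hAjH
      _ = j := gT_card f O j hj
  -- maximality
  have hI : (H ∩ Bj) ∪ gT f O j ∈ 𝓘 := by
    apply hdown _ hBi
    exact union_subset ((inter_subset_right).trans subset_union_right) subset_union_left
  have hIsub : (H ∩ Bj) ∪ gT f O j ⊆ H ∪ gT f O j :=
    union_subset ((inter_subset_left).trans subset_union_left) subset_union_right
  have hIcard : ((H ∩ Bj) ∪ gT f O j).card = (H ∩ Bj).card + j := by
    rw [card_union_of_disjoint, gT_card f O j hj]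
    exact Finset.disjoint_of_subset_left inter_subset_right hBd
  have hmax := gA_max 𝓘 hdown hexch H O a₀ hH hj hI hIsub
  have hHA : (H ∪ Aj).card = H.card + (Aj \ H).card := by
    rw [← union_sdiff_self_eq_union, card_union_of_disjoint disjoint_sdiff]
  rw [hIcard, hHA] at hmax
  have h5 : (gT f O j \ (gA 𝓘 H o O.card \ H)).card ≤ (gT f O j \ (Aj \ H)).card :=
    card_le_card hsub1
  omega

lemma surrogate_ge (f : Finset α → ℝ) (hmono : MonotoneSetFun f) (H S : Finset α)
    (t : ℕ) (ht : t ≤ H.card) : f S ≤ surrogate f H t S := by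
  unfold surrogate
  have hpos : 0 < H.card.choose t := Nat.choose_pos ht
  have hsum : (H.powersetCard t).card • f S ≤ ∑ H' ∈ H.powersetCard t, f (S ∪ H') := by
    apply Finset.card_nsmul_le_sum
    intro H' _
    exact hmono _ _ subset_union_left
  rw [card_powersetCard] at hsum
  rw [nsmul_eq_mul] at hsum
  have hposR : (0:ℝ) < (H.card.choose t : ℝ) := by exact_mod_cast hpos
  calc f S = (1 / (H.card.choose t : ℝ)) * ((H.card.choose t : ℝ) * f S) := by
        field_simp
    _ ≤ (1 / (H.card.choose t : ℝ)) * ∑ H' ∈ H.powersetCard t, f (S ∪ H') := by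
        apply mul_le_mul_of_nonneg_left hsum
        positivity

end Aux5

/-- A matroid given by a (finite, nonempty, downward-closed) family of independent sets
satisfying the exchange property. -/
def IsMatroid {α : Type*} [DecidableEq α] (I : Finset (Finset α)) : Prop :=
  I.Nonempty ∧ (∀ A ∈ I, ∀ B ⊆ A, B ∈ I) ∧
    (∀ A ∈ I, ∀ B ∈ I, A.card < B.card → ∃ e ∈ B \ A, insert e A ∈ I)

/-- A basis of a matroid is a maximal independent set. -/
def IsBasis {α : Type*} [DecidableEq α] (I : Finset (Finset α)) (B : Finset α) : Prop :=
  B ∈ I ∧ ∀ A ∈ I, B ⊆ A → A = B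

theorem smoothing_lemma_monotone {α : Type*} [DecidableEq α] [Fintype α]
    (𝓘 : Finset (Finset α)) (hM : IsMatroid 𝓘)
    (r : ℕ) (hrank : ∀ B : Finset α, IsBasis 𝓘 B → B.card = r)
    (f : Finset α → ℝ) (hf0 : ∀ S : Finset α, 0 ≤ f S) (hf : Submodular f)
    (hmono : MonotoneSetFun f)
    (Ostar : Finset α) (hO : Ostar ∈ 𝓘) (hOmax : ∀ S ∈ 𝓘, f S ≤ f Ostar)
    (B₀ : Finset α) (hB₀ : IsBasis 𝓘 B₀)
    (h t : ℕ) (ht1 : 1 ≤ t) (hth : t ≤ h) (hhr : h < r) :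
    (1 / (r.choose h : ℝ)) * ∑ H ∈ B₀.powersetCard h,
        sSup {y : ℝ | ∃ S : Finset α,
          S ⊆ Finset.univ \ H ∧ S ∪ H ∈ 𝓘 ∧ y = surrogate f H t S} ≥
      (1 - (h : ℝ) / ((r : ℝ) - (h : ℝ))) * f Ostar := by
  classical
  obtain ⟨hne, hdown, hexch⟩ := hM
  have hB₀card : B₀.card = r := hrank B₀ hB₀
  have hh1 : 1 ≤ h := le_trans ht1 hth
  have hr1 : 1 ≤ r := by omega
  -- all independent sets have card ≤ r
  have hcardle : ∀ A ∈ 𝓘, A.card ≤ r := by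
    intro A hA
    by_contra hgt
    push_neg at hgt
    obtain ⟨e, he, hins⟩ := hexch B₀ hB₀.1 A hA (by omega)
    rw [mem_sdiff] at he
    have := hB₀.2 _ hins (subset_insert _ _)
    exact he.2 (this ▸ mem_insert_self e B₀)
  -- extend Ostar to an independent set O of size r
  obtain ⟨CO, hCOB, hCOd, hOind, hCOcard⟩ := extend_indep 𝓘 hexch B₀ hB₀.1 r hB₀card
      (r - Ostar.card) Ostar hO (by have := hcardle Ostar hO; omega)
  set O := Ostar ∪ CO with hOdef
  have hOc : O.card = r := by
    rw [hOdef, card_union_of_disjoint hCOd.symm]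
    have := hcardle Ostar hO
    omega
  have hfO : f O = f Ostar :=
    le_antisymm (hOmax O hOind) (hmono _ _ subset_union_left)
  have hOne : O.Nonempty := by
    rw [← Finset.card_pos, hOc]; omega
  obtain ⟨a₀, ha₀⟩ := hOne
  -- key real constants
  have hCpos : 0 < r.choose h := Nat.choose_pos (le_of_lt hhr)
  have hCR : (0:ℝ) < (r.choose h : ℝ) := by exact_mod_cast hCpos
  have hrR : (0:ℝ) < (r : ℝ) := by exact_mod_cast hr1
  have hPcard : (B₀.powersetCard h).card = r.choose h := by
    rw [card_powersetCard, hB₀card]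
  -- facts about H ∈ P
  have hHfacts : ∀ H ∈ B₀.powersetCard h, H ⊆ B₀ ∧ H.card = h ∧ H ∈ 𝓘 := by
    intro H hH
    rw [mem_powersetCard] at hH
    exact ⟨hH.1, hH.2, hdown B₀ hB₀.1 H hH.1⟩
  -- Step A : pointwise bound for each H
  have hAstep : ∀ H ∈ B₀.powersetCard h,
      f O - ∑ i ∈ range O.card,
          (if gE f O a₀ i ∈ gA 𝓘 H (gE f O a₀) O.card \ H then 0
            else f (gT f O (i + 1)) - f (gT f O i))
        ≤ sSup {y : ℝ | ∃ S : Finset α,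
          S ⊆ Finset.univ \ H ∧ S ∪ H ∈ 𝓘 ∧ y = surrogate f H t S} := by
    intro H hHP
    obtain ⟨hHsub, hHcard, hH𝓘⟩ := hHfacts H hHP
    have hSSO : gA 𝓘 H (gE f O a₀) O.card \ H ⊆ O := by
      refine sdiff_subset.trans ?_
      have := gA_subset_gT (f := f) 𝓘 H O a₀ O.card le_rfl
      rwa [gT_top] at this
    have hls := lost_sum hf O (gA 𝓘 H (gE f O a₀) O.card \ H) a₀ hSSO
    have hsur := surrogate_ge f hmono H (gA 𝓘 H (gE f O a₀) O.card \ H) t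
      (by rw [hHcard]; exact hth)
    have hfeas1 : gA 𝓘 H (gE f O a₀) O.card \ H ⊆ Finset.univ \ H := by
      intro x hx
      rw [mem_sdiff] at hx ⊢
      exact ⟨mem_univ x, hx.2⟩
    have hfeas2 : (gA 𝓘 H (gE f O a₀) O.card \ H) ∪ H ∈ 𝓘 := by
      rw [sdiff_union_self_eq_union, union_comm]
      exact gA_indep 𝓘 hdown H hH𝓘 (gE f O a₀) O.card
    have hmem : surrogate f H t (gA 𝓘 H (gE f O a₀) O.card \ H) ∈
        {y : ℝ | ∃ S : Finset α,
          S ⊆ Finset.univ \ H ∧ S ∪ H ∈ 𝓘 ∧ y = surrogate f H t S} :=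
      ⟨gA 𝓘 H (gE f O a₀) O.card \ H, hfeas1, hfeas2, rfl⟩
    have hbdd : BddAbove {y : ℝ | ∃ S : Finset α,
        S ⊆ Finset.univ \ H ∧ S ∪ H ∈ 𝓘 ∧ y = surrogate f H t S} := by
      apply Set.Finite.bddAbove
      apply Set.Finite.subset (Set.finite_range (fun S : Finset α => surrogate f H t S))
      rintro y ⟨S, _, _, rfl⟩
      exact ⟨S, rfl⟩
    have hsup := le_csSup hbdd hmem
    linarith
  -- Step B : sum the pointwise bounds over H
  have hsum1 : (r.choose h : ℝ) * f O
      - ∑ i ∈ range O.card, (f (gT f O (i + 1)) - f (gT f O i)) *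
          (∑ H ∈ B₀.powersetCard h,
            (if gE f O a₀ i ∈ gA 𝓘 H (gE f O a₀) O.card \ H then (0:ℝ) else 1))
      ≤ ∑ H ∈ B₀.powersetCard h, sSup {y : ℝ | ∃ S : Finset α,
          S ⊆ Finset.univ \ H ∧ S ∪ H ∈ 𝓘 ∧ y = surrogate f H t S} := by
    have hs := Finset.sum_le_sum hAstep
    rw [Finset.sum_sub_distrib, Finset.sum_const, hPcard, nsmul_eq_mul, Finset.sum_comm] at hs
    have hinner : ∀ i ∈ range O.card,
        ∑ H ∈ B₀.powersetCard h,
          (if gE f O a₀ i ∈ gA 𝓘 H (gE f O a₀) O.card \ H then (0:ℝ)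
            else f (gT f O (i + 1)) - f (gT f O i))
        = (f (gT f O (i + 1)) - f (gT f O i)) *
          (∑ H ∈ B₀.powersetCard h,
            (if gE f O a₀ i ∈ gA 𝓘 H (gE f O a₀) O.card \ H then (0:ℝ) else 1)) := by
      intro i _
      rw [Finset.mul_sum]
      apply Finset.sum_congr rfl
      intro H _
      by_cases hc : gE f O a₀ i ∈ gA 𝓘 H (gE f O a₀) O.card \ H
      · simp [hc]
      · simp [hc]
    rwa [Finset.sum_congr rfl hinner] at hs
  -- Step C : prefix bounds for the q-sums
  have hQR : ∀ j, j ≤ O.card →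
      ∑ i ∈ range j, (∑ H ∈ B₀.powersetCard h,
          (if gE f O a₀ i ∈ gA 𝓘 H (gE f O a₀) O.card \ H then (0:ℝ) else 1))
        ≤ ((h : ℝ) * (r.choose h : ℝ) / (r : ℝ)) * j := by
    intro j hj
    have hjr : j ≤ r := by omega
    -- the independent prefix gT j and its completion Bj inside B₀
    have hTj𝓘 : gT f O j ∈ 𝓘 := hdown O hOind _ (gT_subset f O j)
    have hTjc : (gT f O j).card = j := gT_card f O j hj
    obtain ⟨Bj, hBjB, hBjd, hBji, hBjc⟩ := extend_indep 𝓘 hexch B₀ hB₀.1 r hB₀card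
        (r - j) (gT f O j) hTj𝓘 (by omega)
    have hper : ∀ H ∈ B₀.powersetCard h,
        (gT f O j \ (gA 𝓘 H (gE f O a₀) O.card \ H)).card + (H ∩ Bj).card ≤ h := by
      intro H hHP
      obtain ⟨hHsub, hHcard, hH𝓘⟩ := hHfacts H hHP
      have := perH_bound 𝓘 hdown hexch f O a₀ H hH𝓘 hj Bj hBjd hBji
      rwa [hHcard] at this
    have hsumN := Finset.sum_le_sum hper
    rw [Finset.sum_add_distrib, sum_inter_card B₀ Bj r h hB₀card hh1 hBjB,
      Finset.sum_const, hPcard, smul_eq_mul, hBjc] at hsumN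
    -- rewrite the lost count as an index sum
    have hlosteq : ∑ H ∈ B₀.powersetCard h, (gT f O j \ (gA 𝓘 H (gE f O a₀) O.card \ H)).card
        = ∑ i ∈ range j, ∑ H ∈ B₀.powersetCard h,
            (if gE f O a₀ i ∈ gA 𝓘 H (gE f O a₀) O.card \ H then (0:ℕ) else 1) := by
      rw [Finset.sum_comm]
      apply Finset.sum_congr rfl
      intro H _
      exact lost_card_eq f O a₀ _ j hj
    rw [hlosteq] at hsumN
    -- nat arithmetic: r * Σq ≤ j * (h * C)
    have hid : r * (r-1).choose (h-1) = h * r.choose h := by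
      rcases Nat.exists_eq_succ_of_ne_zero (show r ≠ 0 by omega) with ⟨r', hr'⟩
      rcases Nat.exists_eq_succ_of_ne_zero (show h ≠ 0 by omega) with ⟨h', hh'⟩
      subst hr' hh'
      simpa [Nat.succ_sub_one, mul_comm] using Nat.add_one_mul_choose_eq r' h'
    set qs : ℕ := ∑ i ∈ range j, ∑ H ∈ B₀.powersetCard h,
        (if gE f O a₀ i ∈ gA 𝓘 H (gE f O a₀) O.card \ H then (0:ℕ) else 1) with hqs
    have h2 : r * qs + r * ((r-j) * (r-1).choose (h-1)) ≤ r * (r.choose h * h) := by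
      rw [← Nat.mul_add]
      exact Nat.mul_le_mul_left r hsumN
    have h3 : r * ((r-j) * (r-1).choose (h-1)) = (r-j) * (h * r.choose h) := by
      rw [mul_left_comm, hid]
    have h4 : (r-j) * (h * r.choose h) + j * (h * r.choose h) = r * (h * r.choose h) := by
      rw [← add_mul, Nat.sub_add_cancel hjr]
    have h5 : r * (r.choose h * h) = r * (h * r.choose h) := by ring
    have hnat : r * qs ≤ j * (h * r.choose h) := by
      rw [h3] at h2
      rw [h5, ← h4] at h2
      omega
    -- cast to ℝ
    have hcast : ((r : ℝ)) * (∑ i ∈ range j, (∑ H ∈ B₀.powersetCard h,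
          (if gE f O a₀ i ∈ gA 𝓘 H (gE f O a₀) O.card \ H then (0:ℝ) else 1)))
        ≤ (j : ℝ) * ((h:ℝ) * (r.choose h : ℝ)) := by
      have : ((r * qs : ℕ) : ℝ) ≤ ((j * (h * r.choose h) : ℕ) : ℝ) := by exact_mod_cast hnat
      rw [hqs] at this
      push_cast at this
      convert this using 3
    rw [div_mul_eq_mul_div, le_div_iff₀ hrR]
    calc (∑ i ∈ range j, (∑ H ∈ B₀.powersetCard h,
          (if gE f O a₀ i ∈ gA 𝓘 H (gE f O a₀) O.card \ H then (0:ℝ) else 1))) * (r:ℝ)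
        = (r : ℝ) * (∑ i ∈ range j, (∑ H ∈ B₀.powersetCard h,
          (if gE f O a₀ i ∈ gA 𝓘 H (gE f O a₀) O.card \ H then (0:ℝ) else 1))) := by ring
      _ ≤ (j : ℝ) * ((h:ℝ) * (r.choose h : ℝ)) := hcast
      _ = (h:ℝ) * (r.choose h : ℝ) * (j:ℝ) := by ring
  -- Step D : Abel summation
  have hcR0 : (0:ℝ) ≤ (h : ℝ) * (r.choose h : ℝ) / (r : ℝ) := by positivity
  have habel := abel_bound (fun i => f (gT f O (i + 1)) - f (gT f O i))
      (fun i => ∑ H ∈ B₀.powersetCard h,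
        (if gE f O a₀ i ∈ gA 𝓘 H (gE f O a₀) O.card \ H then (0:ℝ) else 1))
      ((h : ℝ) * (r.choose h : ℝ) / (r : ℝ)) O.card hcR0
      (fun i => w_nonneg hmono O i)
      (fun i hi => w_antitone hf O a₀ hi)
      (fun i => Finset.sum_nonneg (fun H _ => by positivity))
      hQR
  have hws : ∑ i ∈ range O.card, (f (gT f O (i + 1)) - f (gT f O i)) ≤ f O := by
    rw [w_sum, gT_top]
    linarith [hf0 ∅]
  have habel2 : ∑ i ∈ range O.card, (f (gT f O (i + 1)) - f (gT f O i)) *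
      (∑ H ∈ B₀.powersetCard h,
        (if gE f O a₀ i ∈ gA 𝓘 H (gE f O a₀) O.card \ H then (0:ℝ) else 1))
      ≤ ((h : ℝ) * (r.choose h : ℝ) / (r : ℝ)) * f O := by
    calc _ ≤ ((h : ℝ) * (r.choose h : ℝ) / (r : ℝ)) *
          ∑ i ∈ range O.card, (f (gT f O (i + 1)) - f (gT f O i)) := habel
      _ ≤ ((h : ℝ) * (r.choose h : ℝ) / (r : ℝ)) * f O :=
          mul_le_mul_of_nonneg_left hws hcR0
  -- Step E : final arithmetic
  rw [ge_iff_le]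
  have hrhR : (0:ℝ) < (r : ℝ) - (h : ℝ) := by
    have : (h:ℝ) < (r:ℝ) := by exact_mod_cast hhr
    linarith
  have hhR0 : (0:ℝ) ≤ (h:ℝ) := by positivity
  have step1 : (1 - (h : ℝ) / ((r : ℝ) - (h : ℝ))) * f Ostar ≤ (1 - (h:ℝ)/(r:ℝ)) * f O := by
    rw [hfO]
    apply mul_le_mul_of_nonneg_right _ (hf0 Ostar)
    have : (h:ℝ)/(r:ℝ) ≤ (h:ℝ)/((r:ℝ) - (h:ℝ)) :=
      div_le_div_of_nonneg_left hhR0 hrhR (by linarith)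
    linarith
  have hSge : (r.choose h : ℝ) * f O - ((h : ℝ) * (r.choose h : ℝ) / (r : ℝ)) * f O
      ≤ ∑ H ∈ B₀.powersetCard h, sSup {y : ℝ | ∃ S : Finset α,
          S ⊆ Finset.univ \ H ∧ S ∪ H ∈ 𝓘 ∧ y = surrogate f H t S} := by
    linarith [hsum1, habel2]
  have step2 : (1 - (h:ℝ)/(r:ℝ)) * f O ≤ (1 / (r.choose h : ℝ)) *
      ∑ H ∈ B₀.powersetCard h, sSup {y : ℝ | ∃ S : Finset α,
          S ⊆ Finset.univ \ H ∧ S ∪ H ∈ 𝓘 ∧ y = surrogate f H t S} := by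
    rw [one_div, inv_mul_eq_div, le_div_iff₀ hCR]
    have hexp : (1 - (h:ℝ)/(r:ℝ)) * f O * (r.choose h : ℝ)
        = (r.choose h : ℝ) * f O - ((h : ℝ) * (r.choose h : ℝ) / (r : ℝ)) * f O := by
      field_simp
    rw [hexp]
    exact hSge
  exact le_trans step1 step2
end

section
/- (Basis exchange property.) For any two bases B₁, B₂ of a matroid on a finite ground set, and for any integer h with 1 ≤ h ≤ |B₁|, there exists a bijection σ from the size-h subsets of B₁ to the size-h subsets of B₂ such that for every subset H ⊆ B₁ with |H| = h, the set (B₂ \ σ(H)) ∪ H is a basis of the matroid. -/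
open Finset

/-!
Downward induction on `h`, starting from `h = #B₁`, where `σ` is constant `B₂`. Given an exchange
bijection `f` at level `h + 1`, one at level `h` is a perfect matching of the bipartite graph
joining `H ⊆ B₁` to `K ⊆ B₂` (both of size `h`) when `B₂ \ K ∪ H` is a basis, so by Hall's theorem
it suffices that every family `𝓢` has at least `#𝓢` neighbours. For `H ∈ 𝓢` and `x ∈ B₁ \ H`,
Brualdi's bijective single-element exchange between the bases `B₂ \ f (H + x) ∪ (H + x)` and `B₂`
gives `y ∈ f (H + x)` such that `K = f (H + x) - y` is a neighbour of `H`. This yields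
`#𝓢 * (#B₁ - h)` pairs `(H, x)`, and each neighbour `K` receives at most `#(B₂ \ K) = #B₁ - h` of
them, because `K + y` and `y` determine `H + x` and `x`. Brualdi's exchange is again Hall's
theorem, its condition coming from the exchange axiom.
-/

theorem Finset.exists_injOn_of_card_le_card_filter {β γ : Type*} [DecidableEq γ] [Nonempty γ]
    {s : Finset β} {t : Finset γ} {r : β → γ → Prop} [∀ x y, Decidable (r x y)]
    (hall : ∀ S ⊆ s, #S ≤ #{y ∈ t | ∃ x ∈ S, r x y}) :
    ∃ f : β → γ, Set.InjOn f s ∧ ∀ x ∈ s, f x ∈ t ∧ r x (f x) := by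
  classical
  obtain ⟨g, hg, hgt⟩ := (all_card_le_biUnion_card_iff_exists_injective
    fun x : s => {y ∈ t | r x y}).mp fun S => by
      have hS : S.biUnion (fun x : s => {y ∈ t | r x y}) =
          {y ∈ t | ∃ x ∈ S.map (Function.Embedding.subtype _), r x y} := by
        ext y
        simp only [mem_biUnion, mem_filter, Subtype.exists, exists_and_right, mem_map,
          Function.Embedding.subtype_apply, exists_eq_right]
        tauto
      simpa [hS] using hall _ fun _ => property_of_mem_map_subtype S
  refine ⟨fun x => if hx : x ∈ s then g ⟨x, hx⟩ else Classical.arbitrary γ, ?_, ?_⟩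
  · intro x hx y hy hxy
    simpa [dif_pos (mem_coe.mp hx), dif_pos (mem_coe.mp hy), hg.eq_iff] using hxy
  · intro x hx
    simpa [dif_pos hx] using hgt ⟨x, hx⟩

namespace IsMatroid

variable {α : Type*} [DecidableEq α] {𝓘 : Finset (Finset α)} {A B B' : Finset α}

theorem card_le_of_isBasis (hM : IsMatroid 𝓘) (hA : A ∈ 𝓘) (hB : IsBasis 𝓘 B) :
    #A ≤ #B := by
  by_contra! hlt
  obtain ⟨e, he, hins⟩ := hM.2.2 B hB.1 A hA hlt
  exact (mem_sdiff.mp he).2 (hB.2 _ hins (subset_insert _ _) ▸ mem_insert_self e B)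

theorem card_eq_of_isBasis (hM : IsMatroid 𝓘) (hB : IsBasis 𝓘 B) (hB' : IsBasis 𝓘 B') :
    #B = #B' :=
  (hM.card_le_of_isBasis hB.1 hB').antisymm (hM.card_le_of_isBasis hB'.1 hB)

theorem isBasis_of_card_le (hM : IsMatroid 𝓘) (hA : A ∈ 𝓘) (hB : IsBasis 𝓘 B)
    (hcard : #B ≤ #A) : IsBasis 𝓘 A :=
  ⟨hA, fun _ hA' hsub =>
    (eq_of_subset_of_card_le hsub ((hM.card_le_of_isBasis hA' hB).trans hcard)).symm⟩

theorem exists_isBasis_subset_union (hM : IsMatroid 𝓘) (hA : A ∈ 𝓘) (hB : IsBasis 𝓘 B) :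
    ∃ C, IsBasis 𝓘 C ∧ A ⊆ C ∧ C ⊆ A ∪ B := by
  induction hn : #B - #A generalizing A with
  | zero =>
    exact ⟨A, hM.isBasis_of_card_le hA hB (by omega), subset_rfl, subset_union_left⟩
  | succ n ih =>
    obtain ⟨e, he, hins⟩ := hM.2.2 A hA B hB.1 (by omega)
    obtain ⟨heB, heA⟩ := mem_sdiff.mp he
    obtain ⟨C, hC, hAC, hCB⟩ := ih hins (by rw [card_insert_of_notMem heA]; omega)
    refine ⟨C, hC, (subset_insert e A).trans hAC, hCB.trans ?_⟩
    rw [insert_union]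
    exact insert_subset (mem_union_right _ heB) subset_rfl

theorem exists_isBasis_insert_erase (hM : IsMatroid 𝓘) (hB : IsBasis 𝓘 B) {I : Finset α}
    (hIB : I ⊆ B) {e : α} (heI : e ∉ I) (hins : insert e I ∈ 𝓘) :
    ∃ z ∈ B \ I, IsBasis 𝓘 (insert e (B.erase z)) := by
  by_cases heB : e ∈ B
  · exact ⟨e, mem_sdiff.mpr ⟨heB, heI⟩, by rwa [insert_erase heB]⟩
  obtain ⟨C, hC, hIC, hCIB⟩ := hM.exists_isBasis_subset_union hins hB
  have hCB : C ⊆ insert e B := hCIB.trans (by rw [insert_union, union_eq_right.mpr hIB])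
  have hcard := hM.card_eq_of_isBasis hC hB
  obtain ⟨z, hzB, hzC⟩ : ∃ z ∈ B, z ∉ C := by
    by_contra! hBC
    have := card_le_card (insert_subset (hIC (mem_insert_self e I)) hBC)
    rw [card_insert_of_notMem heB] at this
    omega
  have hsub : C ⊆ insert e (B.erase z) := fun a ha => by
    rcases mem_insert.mp (hCB ha) with rfl | haB
    · exact mem_insert_self _ _
    · exact mem_insert_of_mem (mem_erase.mpr ⟨fun h => hzC (h ▸ ha), haB⟩)
  have hCeq : C = insert e (B.erase z) := eq_of_subset_of_card_le hsub <| by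
    have := card_insert_le e (B.erase z)
    rw [card_erase_add_one hzB] at this
    omega
  exact ⟨z, mem_sdiff.mpr ⟨hzB, fun hzI => hzC (hIC (mem_insert_of_mem hzI))⟩, hCeq ▸ hC⟩

theorem exists_injOn_isBasis_insert_erase (hM : IsMatroid 𝓘) (hB : IsBasis 𝓘 B)
    (hB' : IsBasis 𝓘 B') :
    ∃ π : α → α, Set.InjOn π B ∧ ∀ x ∈ B, π x ∈ B' ∧ IsBasis 𝓘 (insert (π x) (B.erase x)) := by
  classical
  cases isEmpty_or_nonempty α
  · exact ⟨id, Set.injOn_id _, fun x => isEmptyElim x⟩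
  refine exists_injOn_of_card_le_card_filter
    (r := fun x y => IsBasis 𝓘 (insert y (B.erase x))) fun S hS => ?_
  set N := {y ∈ B' | ∃ x ∈ S, IsBasis 𝓘 (insert y (B.erase x))}
  have hNB' : N ⊆ B' := filter_subset _ _
  suffices #(B' \ N) ≤ #(B \ S) by
    rw [card_sdiff_of_subset hNB', card_sdiff_of_subset hS, ← hM.card_eq_of_isBasis hB hB'] at this
    have := card_le_card hS
    have := card_le_card hNB'
    omega
  -- An element exchanged from `B' \ N` into `B \ S` would already lie in `N`.
  by_contra! hlt
  obtain ⟨e, he, hins⟩ :=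
    hM.2.2 _ (hM.2.1 B hB.1 _ sdiff_subset) _ (hM.2.1 B' hB'.1 _ sdiff_subset) hlt
  obtain ⟨heBN, heBS⟩ := mem_sdiff.mp he
  obtain ⟨heB', heN⟩ := mem_sdiff.mp heBN
  obtain ⟨z, hz, hbasis⟩ := hM.exists_isBasis_insert_erase hB sdiff_subset heBS hins
  rw [Finset.sdiff_sdiff_eq_self hS] at hz
  exact heN (mem_filter.mpr ⟨heB', z, hz, hbasis⟩)

theorem exists_injOn_exchange (hM : IsMatroid 𝓘) (hB : IsBasis 𝓘 B) {K H : Finset α}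
    (hK : K ⊆ B) (hKH : #K = #H) (hD : IsBasis 𝓘 (B \ K ∪ H)) :
    ∃ π : α → α, Set.InjOn π H ∧
      ∀ x ∈ H, π x ∈ K ∧ IsBasis 𝓘 (B \ K.erase (π x) ∪ H.erase x) := by
  have hdisj : Disjoint (B \ K) H := by
    rw [← card_union_eq_card_add_card, hM.card_eq_of_isBasis hD hB, card_sdiff_of_subset hK, hKH]
    have := hKH ▸ card_le_card hK
    omega
  obtain ⟨π, hπinj, hπ⟩ := hM.exists_injOn_isBasis_insert_erase hD hB
  refine ⟨π, hπinj.mono (coe_subset.mpr subset_union_right), fun x hx => ?_⟩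
  have hxD : x ∈ B \ K ∪ H := mem_union_right _ hx
  have hxBK : x ∉ B \ K := disjoint_right.mp hdisj hx
  obtain ⟨hyB, hbasis⟩ := hπ x hxD
  have hyK : π x ∈ K := by
    by_contra hyK
    have hyBK : π x ∈ B \ K := mem_sdiff.mpr ⟨hyB, hyK⟩
    have hD_eq := hbasis.2 _ hD.1 (insert_subset (mem_union_left _ hyBK) (erase_subset _ _))
    rcases mem_insert.mp (hD_eq ▸ hxD) with hxy | hxD'
    · exact hxBK (hxy ▸ hyBK)
    · exact notMem_erase x _ hxD'
  refine ⟨hyK, ?_⟩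
  convert hbasis using 1
  ext a
  simp only [mem_union, mem_sdiff, mem_erase, mem_insert] at hxBK ⊢
  grind

end IsMatroid

section DoubleCounting

variable {α : Type*} [DecidableEq α] {𝓘 : Finset (Finset α)} {B₁ B₂ : Finset α} {k : ℕ}

theorem card_sigma_sdiff_of_subset_powersetCard {𝓢 : Finset (Finset α)}
    (h𝓢 : 𝓢 ⊆ B₁.powersetCard k) : #(𝓢.sigma fun H => B₁ \ H) = #𝓢 * (#B₁ - k) := by
  rw [card_sigma, sum_const_nat]
  intro H hH
  obtain ⟨hHB, hHk⟩ := mem_powersetCard.mp (h𝓢 hH)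
  rw [card_sdiff_of_subset hHB, hHk]

theorem eq_and_eq_of_erase_eq {U : Set (Finset α)} {f : Finset α → Finset α}
    {π : Finset α → α → α} (hf : Set.InjOn f U)
    (hπ : ∀ H ∈ U, Set.InjOn (π H) H ∧ ∀ x ∈ H, π H x ∈ f H)
    {H₁ H₂ : Finset α} (hH₁ : H₁ ∈ U) (hH₂ : H₂ ∈ U) {x₁ x₂ : α} (hx₁ : x₁ ∈ H₁) (hx₂ : x₂ ∈ H₂)
    (herase : (f H₁).erase (π H₁ x₁) = (f H₂).erase (π H₂ x₂)) (hπx : π H₁ x₁ = π H₂ x₂) :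
    H₁ = H₂ ∧ x₁ = x₂ := by
  have hH : H₁ = H₂ := hf hH₁ hH₂ <| by
    rw [← insert_erase ((hπ H₁ hH₁).2 x₁ hx₁), ← insert_erase ((hπ H₂ hH₂).2 x₂ hx₂), herase, hπx]
  subst hH
  exact ⟨rfl, (hπ H₁ hH₁).1 hx₁ hx₂ hπx⟩

open Classical in
theorem card_le_card_exchangeable_of_succ (hcard : #B₁ = #B₂) (hk : k < #B₁)
    {f : Finset α → Finset α} (hf : Set.InjOn f (B₁.powersetCard (k + 1)))
    (hfmaps : Set.MapsTo f (B₁.powersetCard (k + 1)) (B₂.powersetCard (k + 1)))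
    {π : Finset α → α → α}
    (hπ : ∀ H ∈ B₁.powersetCard (k + 1), Set.InjOn (π H) H ∧
      ∀ x ∈ H, π H x ∈ f H ∧ IsBasis 𝓘 (B₂ \ (f H).erase (π H x) ∪ H.erase x))
    {𝓢 : Finset (Finset α)} (h𝓢 : 𝓢 ⊆ B₁.powersetCard k) :
    #𝓢 ≤ #{K ∈ B₂.powersetCard k | ∃ H ∈ 𝓢, IsBasis 𝓘 (B₂ \ K ∪ H)} := by
  set N := {K ∈ B₂.powersetCard k | ∃ H ∈ 𝓢, IsBasis 𝓘 (B₂ \ K ∪ H)}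
  let up : (Σ _ : Finset α, α) → Finset α := fun p => insert p.2 p.1
  let down : (Σ _ : Finset α, α) → Finset α := fun p => (f (up p)).erase (π (up p) p.2)
  have hup : ∀ p ∈ 𝓢.sigma fun H => B₁ \ H,
      up p ∈ B₁.powersetCard (k + 1) ∧ p.1 ∈ 𝓢 ∧ p.2 ∉ p.1 := by
    intro p hp
    obtain ⟨hp𝓢, hpB⟩ := mem_sigma.mp hp
    obtain ⟨hp₂B, hp₂⟩ := mem_sdiff.mp hpB
    obtain ⟨hp₁B, hp₁k⟩ := mem_powersetCard.mp (h𝓢 hp𝓢)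
    refine ⟨mem_powersetCard.mpr ⟨insert_subset hp₂B hp₁B, ?_⟩, hp𝓢, hp₂⟩
    rw [card_insert_of_notMem hp₂, hp₁k]
  have hdown : ∀ p ∈ 𝓢.sigma fun H => B₁ \ H, down p ∈ N := by
    intro p hp
    obtain ⟨hpk, hp𝓢, hp₂⟩ := hup p hp
    obtain ⟨hπf, hbasis⟩ := (hπ _ hpk).2 p.2 (mem_insert_self _ _)
    obtain ⟨hfB, hfk⟩ := mem_powersetCard.mp (hfmaps hpk)
    refine mem_filter.mpr ⟨mem_powersetCard.mpr ⟨(erase_subset _ _).trans hfB, ?_⟩, p.1, hp𝓢, ?_⟩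
    · rw [card_erase_of_mem hπf, hfk, Nat.add_sub_cancel]
    · simpa only [up, erase_insert hp₂] using hbasis
  -- Each fibre of `down` over `K` injects into `B₂ \ K` via `p ↦ π (up p) p.2`.
  have hfiber : ∀ K ∈ N, #{p ∈ 𝓢.sigma (fun H => B₁ \ H) | down p = K} ≤ #B₁ - k := by
    intro K hK
    obtain ⟨hKB, hKk⟩ := mem_powersetCard.mp (mem_filter.mp hK).1
    rw [hcard, ← hKk, ← card_sdiff_of_subset hKB]
    refine card_le_card_of_injOn (fun p => π (up p) p.2) (fun p hp => ?_) fun p hp q hq hpq => ?_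
    · obtain ⟨hpΩ, rfl⟩ := mem_filter.mp hp
      have hπf := ((hπ _ (hup p hpΩ).1).2 p.2 (mem_insert_self _ _)).1
      exact mem_sdiff.mpr ⟨(mem_powersetCard.mp (hfmaps (hup p hpΩ).1)).1 hπf, notMem_erase _ _⟩
    · obtain ⟨hpΩ, hpK⟩ := mem_filter.mp hp
      obtain ⟨hqΩ, hqK⟩ := mem_filter.mp hq
      obtain ⟨hpk, -, hp₂⟩ := hup p hpΩ
      obtain ⟨hqk, -, hq₂⟩ := hup q hqΩ
      obtain ⟨hup_eq, h₂⟩ := eq_and_eq_of_erase_eq hf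
        (fun H hH => ⟨(hπ H hH).1, fun x hx => ((hπ H hH).2 x hx).1⟩) hpk hqk
        (mem_insert_self _ _) (mem_insert_self _ _) (hpK.trans hqK.symm) hpq
      have h₁ : p.1 = q.1 := by
        rw [← erase_insert hp₂, ← erase_insert hq₂]
        exact congrArg₂ erase hup_eq h₂
      exact Sigma.ext h₁ (heq_of_eq h₂)
  have hcount : #𝓢 * (#B₁ - k) ≤ #N * (#B₁ - k) := by
    rw [← card_sigma_sdiff_of_subset_powersetCard h𝓢, mul_comm]
    exact card_le_mul_card_image_of_maps_to hdown _ hfiber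
  exact Nat.le_of_mul_le_mul_right hcount (Nat.sub_pos_of_lt hk)

end DoubleCounting

section ExchangeBijection

variable {α : Type*} [DecidableEq α] {𝓘 : Finset (Finset α)} {B₁ B₂ : Finset α} {k : ℕ}

def HasExchangeBijection (𝓘 : Finset (Finset α)) (B₁ B₂ : Finset α) (k : ℕ) : Prop :=
  ∃ σ : Finset α → Finset α,
    Set.BijOn σ (B₁.powersetCard k : Set (Finset α)) (B₂.powersetCard k : Set (Finset α)) ∧
      ∀ H ∈ B₁.powersetCard k, IsBasis 𝓘 ((B₂ \ σ H) ∪ H)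

theorem hasExchangeBijection_card (hB₁ : IsBasis 𝓘 B₁) (hcard : #B₁ = #B₂) :
    HasExchangeBijection 𝓘 B₁ B₂ #B₁ := by
  refine ⟨fun _ => B₂, ?_, fun H hH => ?_⟩
  · rw [powersetCard_self, hcard, powersetCard_self, coe_singleton, coe_singleton]
    exact Set.bijOn_singleton.mpr rfl
  · obtain rfl := mem_singleton.mp (powersetCard_self B₁ ▸ hH)
    simpa using hB₁

theorem IsMatroid.hasExchangeBijection_of_succ (hM : IsMatroid 𝓘) (hB₁ : IsBasis 𝓘 B₁)
    (hB₂ : IsBasis 𝓘 B₂) (hk : k < #B₁) (h : HasExchangeBijection 𝓘 B₁ B₂ (k + 1)) :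
    HasExchangeBijection 𝓘 B₁ B₂ k := by
  classical
  obtain ⟨f, hf, hfbasis⟩ := h
  have hcard := hM.card_eq_of_isBasis hB₁ hB₂
  have : Nonempty (α → α) := ⟨id⟩
  choose! π hπ using fun H (hH : H ∈ B₁.powersetCard (k + 1)) =>
    have ⟨hfB, hfk⟩ := mem_powersetCard.mp (hf.mapsTo hH)
    hM.exists_injOn_exchange hB₂ hfB (hfk.trans (mem_powersetCard.mp hH).2.symm) (hfbasis H hH)
  obtain ⟨σ, hσinj, hσ⟩ := exists_injOn_of_card_le_card_filter
    (s := B₁.powersetCard k) (t := B₂.powersetCard k) (r := fun H K => IsBasis 𝓘 (B₂ \ K ∪ H))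
    fun 𝓢 h𝓢 => card_le_card_exchangeable_of_succ hcard hk hf.injOn hf.mapsTo hπ h𝓢
  have hσmaps : Set.MapsTo σ (B₁.powersetCard k) (B₂.powersetCard k) := fun H hH => (hσ H hH).1
  refine ⟨σ, ⟨hσmaps, hσinj, ?_⟩, fun H hH => (hσ H hH).2⟩
  exact surjOn_of_injOn_of_card_le σ hσmaps hσinj (by simp only [card_powersetCard, hcard, le_rfl])

end ExchangeBijection

theorem basis_exchange_bijection_general {α : Type*} [DecidableEq α]
    (𝓘 : Finset (Finset α)) (hM : IsMatroid 𝓘)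
    (B₁ B₂ : Finset α) (hB₁ : IsBasis 𝓘 B₁) (hB₂ : IsBasis 𝓘 B₂)
    (h : ℕ) (hh : h ≤ B₁.card) :
    ∃ σ : Finset α → Finset α,
      Set.BijOn σ (B₁.powersetCard h : Set (Finset α)) (B₂.powersetCard h : Set (Finset α)) ∧
      ∀ H ∈ B₁.powersetCard h, IsBasis 𝓘 ((B₂ \ σ H) ∪ H) :=
  Nat.decreasingInduction (motive := fun k _ => HasExchangeBijection 𝓘 B₁ B₂ k)
    (fun _ hk => hM.hasExchangeBijection_of_succ hB₁ hB₂ hk)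
    (hasExchangeBijection_card hB₁ (hM.card_eq_of_isBasis hB₁ hB₂)) hh

theorem basis_exchange_bijection {α : Type*} [DecidableEq α] [Fintype α]
    (𝓘 : Finset (Finset α)) (hM : IsMatroid 𝓘)
    (B₁ B₂ : Finset α) (hB₁ : IsBasis 𝓘 B₁) (hB₂ : IsBasis 𝓘 B₂)
    (h : ℕ) (hh1 : 1 ≤ h) (hh : h ≤ B₁.card) :
    ∃ σ : Finset α → Finset α,
      Set.BijOn σ (B₁.powersetCard h : Set (Finset α)) (B₂.powersetCard h : Set (Finset α)) ∧
      ∀ H ∈ B₁.powersetCard h, IsBasis 𝓘 ((B₂ \ σ H) ∪ H) :=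
  basis_exchange_bijection_general 𝓘 hM B₁ B₂ hB₁ hB₂ h hh
end

section
/- Let f : 2^{[n]} → ℝ be a submodular set function with multilinear extension F : ℝ^n → ℝ. Then for any subset O ⊆ [n] and any x ∈ [0,1]^n, Σ_{i ∈ O} ( F(x ∨ 1_i) − F(x) ) ≥ F(x ∨ 1_O) − F(x), where x ∨ 1_O denotes x with all coordinates in O set to 1. -/
open Finset

/-- The multilinear extension of a set function `f : 2^[n] → ℝ`. -/
noncomputable def mlext (n : ℕ) (f : Finset (Fin n) → ℝ) (x : Fin n → ℝ) : ℝ :=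
  ∑ S : Finset (Fin n), f S * ((∏ i ∈ S, x i) * ∏ i ∈ Sᶜ, (1 - x i))

lemma mlext_update (n : ℕ) (f : Finset (Fin n) → ℝ) (y : Fin n → ℝ) (t : Fin n) :
    mlext n f (Function.update y t 1) = mlext n (fun S => f (insert t S)) y := by
  unfold mlext
  rw [← Finset.sum_filter_add_sum_filter_not Finset.univ (fun S => t ∈ S)]
  rw [← Finset.sum_filter_add_sum_filter_not Finset.univ (fun S => t ∈ S)
    (fun S => (fun S => f (insert t S)) S * ((∏ i ∈ S, y i) * ∏ i ∈ Sᶜ, (1 - y i)))]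
  have hz : ∑ S ∈ Finset.univ.filter (fun S => ¬ t ∈ S),
      f S * ((∏ i ∈ S, Function.update y t 1 i) * ∏ i ∈ Sᶜ, (1 - Function.update y t 1 i)) = 0 := by
    apply Finset.sum_eq_zero
    intro S hS
    simp only [Finset.mem_filter] at hS
    have ht : t ∈ Sᶜ := Finset.mem_compl.mpr hS.2
    have : ∏ i ∈ Sᶜ, (1 - Function.update y t 1 i) = 0 := by
      apply Finset.prod_eq_zero ht
      simp
    rw [this]; ring
  rw [hz, add_zero]
  -- reindex the second sum on RHS: S ↦ insert t S from {t ∉ S} to {t ∈ S}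
  have hre : ∑ S ∈ Finset.univ.filter (fun S => ¬ t ∈ S),
      f (insert t S) * ((∏ i ∈ S, y i) * ∏ i ∈ Sᶜ, (1 - y i))
      = ∑ S ∈ Finset.univ.filter (fun S : Finset (Fin n) => t ∈ S),
      f S * ((∏ i ∈ S.erase t, y i) * ∏ i ∈ (S.erase t)ᶜ, (1 - y i)) := by
    apply Finset.sum_nbij' (fun S => insert t S) (fun S => S.erase t)
    · intro S hS; simp only [Finset.mem_filter] at *; simp [hS.2]
    · intro S hS; simp only [Finset.mem_filter] at *; simp
    · intro S hS; simp only [Finset.mem_filter] at hS; exact Finset.erase_insert hS.2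
    · intro S hS; simp only [Finset.mem_filter] at hS; exact Finset.insert_erase hS.2
    · intro S hS; simp only [Finset.mem_filter] at hS
      rw [Finset.erase_insert hS.2]
  rw [hre, ← Finset.sum_add_distrib]
  apply Finset.sum_congr rfl
  intro S hS
  simp only [Finset.mem_filter] at hS
  have ht := hS.2
  have h1 : ∏ i ∈ S, Function.update y t 1 i = ∏ i ∈ S.erase t, y i := by
    rw [← Finset.mul_prod_erase S _ ht, Function.update_self, one_mul]
    apply Finset.prod_congr rfl
    intro i hi
    exact Function.update_of_ne (Finset.ne_of_mem_erase hi) 1 y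
  have h2 : ∏ i ∈ Sᶜ, (1 - Function.update y t 1 i) = ∏ i ∈ Sᶜ, (1 - y i) := by
    apply Finset.prod_congr rfl
    intro i hi
    have : i ≠ t := by intro h; subst h; exact (Finset.mem_compl.mp hi) ht
    rw [Function.update_of_ne this]
  have h3 : ∏ i ∈ S, y i = y t * ∏ i ∈ S.erase t, y i := (Finset.mul_prod_erase S _ ht).symm
  have h4 : (S.erase t)ᶜ = insert t Sᶜ := by
    ext j
    simp only [Finset.mem_compl, Finset.mem_erase, Finset.mem_insert, not_and, Finset.mem_compl]
    by_cases h : j = t <;> simp [h]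
  have h5 : ∏ i ∈ (S.erase t)ᶜ, (1 - y i) = (1 - y t) * ∏ i ∈ Sᶜ, (1 - y i) := by
    rw [h4, Finset.prod_insert (by simp [ht])]
  simp only [h1, h2, h3, h5, Finset.insert_eq_self.mpr ht]
  ring

lemma mlext_ones (n : ℕ) (x : Fin n → ℝ) (T : Finset (Fin n)) :
    ∀ f : Finset (Fin n) → ℝ, mlext n f (fun j => if j ∈ T then 1 else x j)
      = ∑ S : Finset (Fin n), f (S ∪ T) * ((∏ i ∈ S, x i) * ∏ i ∈ Sᶜ, (1 - x i)) := by
  induction T using Finset.induction_on with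
  | empty => intro f; simp [mlext]
  | @insert a T ha ih =>
    intro f
    have key : (fun j => if j ∈ insert a T then 1 else x j)
        = Function.update (fun j => if j ∈ T then 1 else x j) a 1 := by
      funext j
      by_cases h : j = a
      · subst h; simp
      · simp [Function.update_of_ne h, h]
    rw [key, mlext_update, ih]
    apply Finset.sum_congr rfl
    intro S _
    congr 2
    rw [Finset.union_insert]

lemma submod_marginals {n : ℕ} {f : Finset (Fin n) → ℝ} (hf : Submodular f)
    (S : Finset (Fin n)) (O : Finset (Fin n)) :
    ∑ i ∈ O, (f (insert i S) - f S) ≥ f (S ∪ O) - f S := by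
  induction O using Finset.induction_on with
  | empty => simp
  | @insert a O ha ih =>
    rw [Finset.sum_insert ha]
    have h := hf (insert a S) (S ∪ O)
    have h1 : insert a S ∪ (S ∪ O) = S ∪ insert a O := by
      ext j; simp only [Finset.mem_insert, Finset.mem_union]; tauto
    have h2 : insert a S ∩ (S ∪ O) = S := by
      ext j
      simp only [Finset.mem_inter, Finset.mem_insert, Finset.mem_union]
      constructor
      · rintro ⟨h3 | h3, h4 | h4⟩ <;> first | assumption | (subst h3; exact absurd h4 ha)
      · intro h3; exact ⟨Or.inr h3, Or.inl h3⟩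
    rw [h1, h2] at h
    linarith

theorem mlext_sum_marginals_ge (n : ℕ) (f : Finset (Fin n) → ℝ) (hf : Submodular f)
    (O : Finset (Fin n)) (x : Fin n → ℝ) (hx : ∀ k, x k ∈ Set.Icc (0 : ℝ) 1) :
    ∑ i ∈ O, (mlext n f (Function.update x i 1) - mlext n f x) ≥
      mlext n f (fun j => if j ∈ O then 1 else x j) - mlext n f x := by
  have hw : ∀ S : Finset (Fin n), 0 ≤ (∏ i ∈ S, x i) * ∏ i ∈ Sᶜ, (1 - x i) := by
    intro S
    apply mul_nonneg
    · exact Finset.prod_nonneg fun i _ => (hx i).1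
    · exact Finset.prod_nonneg fun i _ => by linarith [(hx i).2]
  have hL : ∑ i ∈ O, (mlext n f (Function.update x i 1) - mlext n f x)
      = ∑ S : Finset (Fin n),
          (∑ i ∈ O, (f (insert i S) - f S)) * ((∏ i ∈ S, x i) * ∏ i ∈ Sᶜ, (1 - x i)) := by
    have step1 : ∀ i, mlext n f (Function.update x i 1) - mlext n f x
        = ∑ S : Finset (Fin n), (f (insert i S) - f S) * ((∏ i ∈ S, x i) * ∏ i ∈ Sᶜ, (1 - x i)) := by
      intro i
      rw [mlext_update]
      unfold mlext
      rw [← Finset.sum_sub_distrib]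
      apply Finset.sum_congr rfl
      intro S _
      ring
    rw [Finset.sum_congr rfl (fun i _ => step1 i), Finset.sum_comm]
    apply Finset.sum_congr rfl
    intro S _
    rw [Finset.sum_mul]
  have hR : mlext n f (fun j => if j ∈ O then 1 else x j) - mlext n f x
      = ∑ S : Finset (Fin n),
          (f (S ∪ O) - f S) * ((∏ i ∈ S, x i) * ∏ i ∈ Sᶜ, (1 - x i)) := by
    rw [mlext_ones]
    unfold mlext
    rw [← Finset.sum_sub_distrib]
    apply Finset.sum_congr rfl
    intro S _
    ring
  rw [hL, hR]
  apply Finset.sum_le_sum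
  intro S _
  exact mul_le_mul_of_nonneg_right (submod_marginals hf S O) (hw S)
end

section
/- For every real number x with 0 < x ≤ 1/2, one has (1 − x)^{1/x} ≤ 1/e + x/(2e). -/
theorem one_sub_rpow_inv_le (x : ℝ) (hx0 : 0 < x) (hx : x ≤ 1 / 2) :
    (1 - x) ^ (1 / x) ≤ 1 / Real.exp 1 + x / (2 * Real.exp 1) := by
  have h1 : (0:ℝ) < 1 - x := by linarith
  have hlog : Real.log (1 - x) ≤ -x := by
    have := Real.log_le_sub_one_of_pos h1
    linarith
  rw [Real.rpow_def_of_pos h1]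
  have h2 : (1 / x) * Real.log (1 - x) ≤ -1 := by
    rw [div_mul_eq_mul_div, one_mul, div_le_iff₀ hx0]
    nlinarith
  have h3 : Real.exp (Real.log (1 - x) * (1 / x)) ≤ Real.exp (-1) := by
    apply Real.exp_le_exp.mpr
    linarith [h2, mul_comm (Real.log (1 - x)) (1 / x)]
  have h4 : Real.exp (-1) = 1 / Real.exp 1 := by
    rw [Real.exp_neg]; ring
  have hepos := Real.exp_pos 1
  have : 0 < x / (2 * Real.exp 1) := by positivity
  linarith [h3, h4.le]
end

section
/- Let a, b, â, b̂ ∈ ℝ and ε ≥ 0 satisfy |â − a| ≤ ε, |b̂ − b| ≤ ε, and a + b ≥ 0. Define (p̂, q̂) = (â/(â + b̂), b̂/(â + b̂)) if â > 0 and b̂ > 0; (p̂, q̂) = (1, 0) if â > 0 and b̂ ≤ 0; and (p̂, q̂) = (0, 1) if â ≤ 0. Then max(p̂·b, q̂·a) − (p̂·a + q̂·b)/2 ≤ (3/2)·ε. -/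
/-!
When both estimates are positive, write `a = â - x`, `b = b̂ - y` with `|x|, |y| ≤ ε`. Then
`2 â b - (â a + b̂ b) = -(â - b̂)² + â x - 2 â y + b̂ y ≤ 3 ε (â + b̂)`, which after dividing by
`2 (â + b̂)` bounds the first term of the maximum; the second is symmetric. When the
algorithm decides deterministically, say `(p̂, q̂) = (0, 1)`, we have `a ≤ â + ε ≤ ε`,
and `a + b ≥ 0` gives `max 0 a - b / 2 ≤ (3 / 2) max 0 a ≤ (3 / 2) ε`.
-/

theorem two_mul_mul_sub_le_of_abs_sub_le {a b ah bh ε : ℝ} (hah : 0 ≤ ah) (hbh : 0 ≤ bh)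
    (ha : |ah - a| ≤ ε) (hb : |bh - b| ≤ ε) :
    2 * (ah * b) - (ah * a + bh * b) ≤ 3 * ε * (ah + bh) := by
  rw [abs_le] at ha hb
  have hx : ah * (ah - a) ≤ ah * ε := mul_le_mul_of_nonneg_left ha.2 hah
  have hy : -(ah * (bh - b)) ≤ ah * ε := by
    linarith [mul_le_mul_of_nonneg_left hb.1 hah]
  have hy' : bh * (bh - b) ≤ bh * ε := mul_le_mul_of_nonneg_left hb.2 hbh
  calc 2 * (ah * b) - (ah * a + bh * b)
      = -(ah - bh) ^ 2 + ah * (ah - a) - 2 * (ah * (bh - b)) + bh * (bh - b) := by ring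
    _ ≤ 3 * ε * (ah + bh) := by nlinarith [sq_nonneg (ah - bh)]

theorem proportional_step_le {a b ah bh ε : ℝ} (hah : 0 < ah) (hbh : 0 < bh)
    (ha : |ah - a| ≤ ε) (hb : |bh - b| ≤ ε) :
    max (ah / (ah + bh) * b) (bh / (ah + bh) * a)
      - (ah / (ah + bh) * a + bh / (ah + bh) * b) / 2 ≤ 3 / 2 * ε := by
  have hp := two_mul_mul_sub_le_of_abs_sub_le hah.le hbh.le ha hb
  have hq := two_mul_mul_sub_le_of_abs_sub_le hbh.le hah.le hb ha
  rw [sub_le_iff_le_add, max_le_iff]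
  constructor
  · field_simp
    linarith
  · field_simp
    linarith

theorem max_zero_sub_half_le {a b ε : ℝ} (hε : 0 ≤ ε) (ha : a ≤ ε) (hab : 0 ≤ a + b) :
    max 0 a - b / 2 ≤ 3 / 2 * ε := by
  linarith [le_max_right 0 a, max_le hε ha]

theorem double_greedy_step_robust_general (a b ah bh ε : ℝ)
    (ha : |ah - a| ≤ ε) (hb : |bh - b| ≤ ε) (hab : a + b ≥ 0) :
    (let p : ℝ := if 0 < ah then (if 0 < bh then ah / (ah + bh) else 1) else 0
     let q : ℝ := if 0 < ah then (if 0 < bh then bh / (ah + bh) else 0) else 1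
     max (p * b) (q * a) - (p * a + q * b) / 2) ≤ (3 / 2) * ε := by
  have hε : 0 ≤ ε := (abs_nonneg _).trans ha
  dsimp only
  split_ifs with hah hbh
  · exact proportional_step_le hah hbh ha hb
  · simp only [one_mul, zero_mul, add_zero, max_comm b]
    refine max_zero_sub_half_le hε ?_ (by linarith)
    linarith [(abs_le.mp hb).1]
  · simp only [one_mul, zero_mul, zero_add]
    refine max_zero_sub_half_le hε ?_ (by linarith)
    linarith [(abs_le.mp ha).1]

theorem double_greedy_step_robust (a b ah bh ε : ℝ) (hε : 0 ≤ ε)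
    (ha : |ah - a| ≤ ε) (hb : |bh - b| ≤ ε) (hab : a + b ≥ 0) :
    (let p : ℝ := if 0 < ah then (if 0 < bh then ah / (ah + bh) else 1) else 0
     let q : ℝ := if 0 < ah then (if 0 < bh then bh / (ah + bh) else 0) else 1
     max (p * b) (q * a) - (p * a + q * b) / 2) ≤ (3 / 2) * ε :=
  double_greedy_step_robust_general a b ah bh ε ha hb hab
end

section
/- Let f : 2^N → ℝ be a non-negative submodular function on a finite ground set N with |N| = n, let S ⊆ N, and let h, t be integers with 1 ≤ t < h < n. Then the averages over all size-h subsets H of N satisfy (1/binom(n,h)) · Σ_{H ⊆ N, |H| = h} F^{H,t}(S \ H) ≥ (1/binom(n,h)) · Σ_{H ⊆ N, |H| = h} F^{H,t}(S) − (h/(n − h)) · max{ f(S') : S' ⊆ N, |S'| ≤ |S| + h }. -/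
open Finset

/-!
Swap the two averages: for a fixed `t`-set `H'`, average over the `h`-sets `H ⊇ H'`. With
`g = f (· ∪ H')` and `R = S \ H'`, every element of `R` lies in such an `H` with the same
probability `p = (h - t) / (n - t)`, and adding the elements of `R` one at a time, diminishing
returns shows that removing `H` from `R` keeps at least `(1 - p) g(R)` on average. The loss is
thus at most `p · f (S ∪ H')`, which is at most `p` times the maximum `M`, and
`p ≤ h / (n - h)`.
-/

namespace Submodular

variable {α : Type*} [DecidableEq α] {f : Finset α → ℝ}

theorem comp_union_right (hf : Submodular f) (C : Finset α) :
    Submodular fun X => f (X ∪ C) := by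
  intro A B
  convert hf (A ∪ C) (B ∪ C) using 3
  · rw [union_union_distrib_right]
  · rw [inter_union_distrib_right]

theorem insert_sub_le_insert_sub (hf : Submodular f) {X Y : Finset α} {a : α}
    (hXY : X ⊆ Y) (ha : a ∉ Y) :
    f (insert a Y) - f Y ≤ f (insert a X) - f X := by
  have h := hf (insert a X) Y
  rw [insert_union, union_eq_right.2 hXY,
    insert_inter_of_notMem ha, inter_eq_left.2 hXY] at h
  linarith

/-- Removing a random set that contains each element of `R` with probability `c / #𝒜` keeps
at least the fraction `1 - c / #𝒜` of `f R`. -/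
theorem card_sub_mul_add_le_sum_sdiff (hf : Submodular f) (𝒜 : Finset (Finset α)) (c : ℕ)
    (R : Finset α) (h𝒜 : ∀ x ∈ R, #{A ∈ 𝒜 | x ∈ A} = c) :
    ((#𝒜 : ℝ) - c) * f R + c * f ∅ ≤ ∑ A ∈ 𝒜, f (R \ A) := by
  induction R using Finset.induction_on with
  | empty => simp [sub_mul]
  | @insert a R ha ih =>
    have ih := ih fun x hx => h𝒜 x (mem_insert_of_mem hx)
    have hmarg : ∀ A ∈ 𝒜, (if a ∈ A then 0 else f (insert a R) - f R)
        ≤ f (insert a R \ A) - f (R \ A) := by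
      intro A _
      split_ifs with haA
      · simp [insert_sdiff_of_mem _ haA]
      · rw [insert_sdiff_of_notMem _ haA]
        exact hf.insert_sub_le_insert_sub sdiff_subset ha
    have hcount : (#{A ∈ 𝒜 | a ∉ A} : ℝ) = #𝒜 - c := by
      rw [← h𝒜 a (mem_insert_self a R), eq_sub_iff_add_eq']
      exact_mod_cast card_filter_add_card_filter_not (s := 𝒜) (a ∈ ·)
    have := sum_le_sum hmarg
    rw [sum_ite, sum_const_zero, sum_const, nsmul_eq_mul, zero_add, hcount,
      sum_sub_distrib] at this
    linarith

end Submodular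

section Supersets

variable {α : Type*} [DecidableEq α] [Fintype α] {f : Finset α → ℝ}

def supersetsCard (k : ℕ) (D : Finset α) : Finset (Finset α) :=
  {H ∈ powersetCard k univ | D ⊆ H}

theorem mem_supersetsCard {k : ℕ} {D H : Finset α} :
    H ∈ supersetsCard k D ↔ #H = k ∧ D ⊆ H := by
  simp [supersetsCard]

theorem card_supersetsCard {k : ℕ} {D : Finset α} (hD : #D ≤ k) :
    #(supersetsCard k D) = (Fintype.card α - #D).choose (k - #D) := by
  rw [← card_compl, ← card_powersetCard]
  refine card_nbij' (· \ D) (· ∪ D) ?_ ?_ ?_ ?_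
  · intro H hH
    simp only [mem_coe, mem_powersetCard, mem_supersetsCard] at hH ⊢
    exact ⟨fun x hx => by simp_all, by rw [card_sdiff_of_subset hH.2, hH.1]⟩
  · intro Y hY
    simp only [mem_coe, mem_powersetCard, mem_supersetsCard] at hY ⊢
    rw [card_union_of_disjoint (subset_compl_iff_disjoint_right.1 hY.1), hY.2]
    exact ⟨by omega, subset_union_right⟩
  · intro H hH
    exact sdiff_union_of_subset (mem_supersetsCard.1 hH).2
  · intro Y hY
    simp only [mem_coe, mem_powersetCard] at hY
    dsimp only
    rw [union_sdiff_right, sdiff_eq_self_of_disjoint (subset_compl_iff_disjoint_right.1 hY.1)]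

theorem card_filter_mem_supersetsCard {k : ℕ} {D : Finset α} {x : α} (hx : x ∉ D)
    (hDk : #D < k) :
    #{H ∈ supersetsCard k D | x ∈ H} = (Fintype.card α - #D - 1).choose (k - #D - 1) := by
  have : {H ∈ supersetsCard k D | x ∈ H} = supersetsCard k (insert x D) := by
    ext H
    simp only [mem_filter, mem_supersetsCard, insert_subset_iff]
    tauto
  rw [this, card_supersetsCard (by rw [card_insert_of_notMem hx]; omega),
    card_insert_of_notMem hx, Nat.sub_sub, Nat.sub_sub]

theorem sum_powersetCard_sum_powersetCard_comm {β : Type*} [AddCommMonoid β] (h t : ℕ)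
    (F : Finset α → Finset α → β) :
    ∑ H ∈ powersetCard h univ, ∑ H' ∈ powersetCard t H, F H H' =
      ∑ H' ∈ powersetCard t univ, ∑ H ∈ supersetsCard h H', F H H' := by
  refine sum_comm' fun H H' => ?_
  simp only [mem_powersetCard, mem_supersetsCard, subset_univ, true_and]
  tauto

theorem Submodular.sum_supersetsCard_sub_le (hf : Submodular f) {D : Finset α} (hD : 0 ≤ f D)
    (S : Finset α) {k : ℕ} (hDk : #D < k) :
    ∑ H ∈ supersetsCard k D, (f (S ∪ D) - f (S \ H ∪ D)) ≤
      (Fintype.card α - #D - 1).choose (k - #D - 1) * f (S ∪ D) := by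
  set c := (Fintype.card α - #D - 1).choose (k - #D - 1)
  have hmarg : ∀ x ∈ S \ D, #{H ∈ supersetsCard k D | x ∈ H} = c := fun x hx =>
    card_filter_mem_supersetsCard (mem_sdiff.1 hx).2 hDk
  have key := (hf.comp_union_right D).card_sub_mul_add_le_sum_sdiff _ c (S \ D) hmarg
  have hsdiff : ∀ H ∈ supersetsCard k D, f ((S \ D) \ H ∪ D) = f (S \ H ∪ D) := fun H hH => by
    rw [sdiff_sdiff_left, sup_eq_right.2 (mem_supersetsCard.1 hH).2]
  simp only [sdiff_union_self_eq_union, empty_union] at key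
  rw [sum_congr rfl hsdiff] at key
  rw [sum_sub_distrib, sum_const, nsmul_eq_mul]
  linarith [mul_nonneg (Nat.cast_nonneg c : (0 : ℝ) ≤ c) hD]

end Supersets

theorem sum_surrogate_sub_surrogate_sdiff {α : Type*} [DecidableEq α] [Fintype α]
    (f : Finset α → ℝ) (S : Finset α) (h t : ℕ) :
    ∑ H ∈ powersetCard h univ, (surrogate f H t S - surrogate f H t (S \ H)) =
      (h.choose t : ℝ)⁻¹ * ∑ H' ∈ powersetCard t univ, ∑ H ∈ supersetsCard h H',
        (f (S ∪ H') - f (S \ H ∪ H')) := by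
  rw [← sum_powersetCard_sum_powersetCard_comm, mul_sum]
  refine sum_congr rfl fun H hH => ?_
  simp only [surrogate, (mem_powersetCard.1 hH).2, one_div, ← mul_sub, sum_sub_distrib]

theorem le_sSup_of_card_le {α : Type*} [Fintype α] (f : Finset α → ℝ) {m : ℕ} {S : Finset α}
    (hS : #S ≤ m) : f S ≤ sSup {y : ℝ | ∃ S' : Finset α, #S' ≤ m ∧ y = f S'} :=
  le_csSup ((Set.finite_range f).subset (by rintro _ ⟨S', -, rfl⟩; exact ⟨S', rfl⟩)).bddAbove
    ⟨S, hS, rfl⟩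

theorem Nat.choose_mul_choose_sub_one_mul_le {n h t : ℕ} (hth : t < h) (hhn : h ≤ n) :
    n.choose t * (n - t - 1).choose (h - t - 1) * (n - h) ≤ h * (n.choose h * h.choose t) := by
  have hpascal : (n - t) * (n - t - 1).choose (h - t - 1) = (n - t).choose (h - t) * (h - t) := by
    have := Nat.add_one_mul_choose_eq (n - t - 1) (h - t - 1)
    rwa [Nat.sub_add_cancel (by omega), Nat.sub_add_cancel (by omega)] at this
  have hmono : (n - h) * (h - t) ≤ h * (n - t) :=
    (Nat.mul_le_mul (Nat.sub_le_sub_left hth.le n) (Nat.sub_le h t)).trans_eq (Nat.mul_comm _ _)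
  rw [Nat.choose_mul hth.le]
  refine Nat.le_of_mul_le_mul_right ?_ (Nat.sub_pos_of_lt hth)
  calc n.choose t * (n - t - 1).choose (h - t - 1) * (n - h) * (h - t)
      = n.choose t * (n - t - 1).choose (h - t - 1) * ((n - h) * (h - t)) := by ring
    _ ≤ n.choose t * (n - t - 1).choose (h - t - 1) * (h * (n - t)) := by gcongr
    _ = h * (n.choose t * ((n - t) * (n - t - 1).choose (h - t - 1))) := by ring
    _ = h * (n.choose t * (n - t).choose (h - t)) * (h - t) := by rw [hpascal]; ring

theorem choose_mul_choose_sub_one_div_le {n h t : ℕ} (hth : t < h) (hhn : h < n) :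
    (n.choose t * (n - t - 1).choose (h - t - 1) : ℝ) / (n.choose h * h.choose t) ≤
      h / (n - h) := by
  have hpos : (0 : ℝ) < n - h := sub_pos.2 (by exact_mod_cast hhn)
  have hchoose : (0 : ℝ) < n.choose h * h.choose t := by
    have := Nat.choose_pos hhn.le; have := Nat.choose_pos hth.le; positivity
  rw [div_le_div_iff₀ hchoose hpos, ← Nat.cast_sub hhn.le]
  exact_mod_cast Nat.choose_mul_choose_sub_one_mul_le hth hhn.le

theorem average_surrogate_remove_H_general {α : Type*} [DecidableEq α] [Fintype α]
    (n : ℕ) (hn : Fintype.card α = n)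
    (f : Finset α → ℝ) (hf0 : ∀ S : Finset α, 0 ≤ f S) (hf : Submodular f)
    (S : Finset α) (h t : ℕ) (hth : t < h) (hhn : h < n) :
    (1 / (n.choose h : ℝ)) * ∑ H ∈ (Finset.univ : Finset α).powersetCard h,
        surrogate f H t (S \ H) ≥
      (1 / (n.choose h : ℝ)) * ∑ H ∈ (Finset.univ : Finset α).powersetCard h,
          surrogate f H t S -
        ((h : ℝ) / ((n : ℝ) - (h : ℝ))) *
          sSup {y : ℝ | ∃ S' : Finset α, S'.card ≤ S.card + h ∧ y = f S'} := by
  set M := sSup {y : ℝ | ∃ S' : Finset α, S'.card ≤ S.card + h ∧ y = f S'}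
  have hM0 : 0 ≤ M := (hf0 ∅).trans (le_sSup_of_card_le f (by simp))
  set c := (n - t - 1).choose (h - t - 1)
  have hloss : ∑ H ∈ powersetCard h univ, (surrogate f H t S - surrogate f H t (S \ H)) ≤
      (h.choose t : ℝ)⁻¹ * (n.choose t * c * M) := by
    rw [sum_surrogate_sub_surrogate_sdiff]
    gcongr
    calc _ ≤ ∑ H' ∈ powersetCard t univ, (c : ℝ) * M := by
          refine sum_le_sum fun H' hH' => ?_
          rw [mem_powersetCard] at hH'
          have hlossH' := hf.sum_supersetsCard_sub_le (hf0 H') S (k := h) (by omega)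
          rw [hn, hH'.2] at hlossH'
          have hSH' : #(S ∪ H') ≤ #S + h := (card_union_le _ _).trans (by omega)
          exact hlossH'.trans (by gcongr; exact le_sSup_of_card_le f hSH')
      _ = n.choose t * c * M := by
          rw [sum_const, card_powersetCard, card_univ, hn, nsmul_eq_mul, mul_assoc]
  rw [ge_iff_le, sub_le_comm, ← mul_sub, ← sum_sub_distrib]
  calc _ ≤ 1 / (n.choose h : ℝ) * ((h.choose t : ℝ)⁻¹ * (n.choose t * c * M)) := by gcongr
    _ = (n.choose t * c : ℝ) / (n.choose h * h.choose t) * M := by ring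
    _ ≤ h / (n - h) * M := by gcongr ?_ * M; exact choose_mul_choose_sub_one_div_le hth hhn

theorem average_surrogate_remove_H {α : Type*} [DecidableEq α] [Fintype α]
    (n : ℕ) (hn : Fintype.card α = n)
    (f : Finset α → ℝ) (hf0 : ∀ S : Finset α, 0 ≤ f S) (hf : Submodular f)
    (S : Finset α) (h t : ℕ) (ht1 : 1 ≤ t) (hth : t < h) (hhn : h < n) :
    (1 / (n.choose h : ℝ)) * ∑ H ∈ (Finset.univ : Finset α).powersetCard h,
        surrogate f H t (S \ H) ≥
      (1 / (n.choose h : ℝ)) * ∑ H ∈ (Finset.univ : Finset α).powersetCard h,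
          surrogate f H t S -
        ((h : ℝ) / ((n : ℝ) - (h : ℝ))) *
          sSup {y : ℝ | ∃ S' : Finset α, S'.card ≤ S.card + h ∧ y = f S'} :=
  average_surrogate_remove_H_general n hn f hf0 hf S h t hth hhn
end

section
/- (One-step improvement of measured continuous greedy with approximate values.) Let f : 2^{[n]} → ℝ be a non-negative submodular function with multilinear extension F, let f_max ≥ max_{S ⊆ [n]} f(S), let O ⊆ [n], let ε ≥ 0, and let f̂ : 2^{[n]} → ℝ with multilinear extension F̂ satisfy |f̂(S) − f(S)| ≤ ε for all S ⊆ [n]. Write ∂_i G(x) = G(x ∨ 1_i) − G(x ∧ 1_{ī}) for G ∈ {F, F̂}. Let δ ∈ (0,1), let x ∈ [0,1]^n, and let y ∈ [0,1]^n satisfy Σ_{i=1}^n ∂_i F̂(x) · (1 − x_i) · y_i ≥ Σ_{i ∈ O} ∂_i F̂(x) · (1 − x_i). Define x' ∈ [0,1]^n by x'_i = x_i + δ(1 − x_i)y_i. Then F(x') − F(x) ≥ δ · ( F(x ∨ 1_O) − F(x) ) − 4nδε − n³δ²·f_max. -/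
open Finset

/-- The partial derivative of the multilinear extension in coordinate `i`. -/
noncomputable def mlextDeriv (n : ℕ) (f : Finset (Fin n) → ℝ) (x : Fin n → ℝ) (i : Fin n) : ℝ :=
  mlext n f (Function.update x i 1) - mlext n f (Function.update x i 0)

/-!
The multilinear extension `F` is affine in each coordinate, with slope `∂ₖF`, and `∂ₖF` is itself
the multilinear extension of the discrete derivative `setDeriv k f`. Moving from `x` to `x'` one
coordinate at a time therefore gives a second-order Taylor bound whose error is governed by the
mixed discrete derivatives; these are bounded by `2 fmax`, so the error is at most
`fmax (∑ᵢ |x'ᵢ - xᵢ|)² ≤ n² δ² fmax`. Submodularity makes the mixed discrete derivatives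
nonpositive, so `F` is concave along nonnegative directions and
`F(x ∨ 1_O) - F(x) ≤ ∑_{i ∈ O} (1 - xᵢ) ∂ᵢF(x)`. Finally `|∂ᵢF̂ - ∂ᵢF| ≤ 2ε`, which costs `2nε`
once when trading `F` for `F̂` in the choice of `y` and once when trading back.
-/

open Function

section SetDeriv

variable {α : Type*} [DecidableEq α]

def setDeriv (k : α) (f : Finset α → ℝ) (S : Finset α) : ℝ :=
  f (insert k S) - f (S.erase k)

lemma abs_setDeriv_sub_le {f : Finset α → ℝ} {c : ℝ} (hf : ∀ S T, |f S - f T| ≤ c)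
    (k : α) (S T : Finset α) : |setDeriv k f S - setDeriv k f T| ≤ 2 * c := by
  calc |setDeriv k f S - setDeriv k f T| ≤ |setDeriv k f S| + |setDeriv k f T| := abs_sub _ _
    _ ≤ c + c := add_le_add (hf _ _) (hf _ _)
    _ = 2 * c := by ring

lemma Submodular.setDeriv_setDeriv_nonpos {f : Finset α → ℝ} (hf : Submodular f) (j k : α)
    (S : Finset α) : setDeriv k (setDeriv j f) S ≤ 0 := by
  have h := hf (insert j (S.erase k)) ((insert k S).erase j)
  have hunion : insert j (S.erase k) ∪ (insert k S).erase j = insert j (insert k S) := by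
    ext a; simp only [mem_union, mem_insert, mem_erase]; tauto
  have hinter : insert j (S.erase k) ∩ (insert k S).erase j = (S.erase k).erase j := by
    ext a; simp only [mem_inter, mem_insert, mem_erase]; tauto
  rw [hunion, hinter] at h
  simp only [setDeriv]
  linarith

lemma sum_eq_sum_powerset_erase_add_insert [Fintype α] {M : Type*} [AddCommMonoid M] (k : α)
    (g : Finset α → M) :
    ∑ S, g S = ∑ T ∈ (univ.erase k).powerset, (g T + g (insert k T)) := by
  rw [← powerset_univ, ← insert_erase (mem_univ k), sum_powerset_insert (notMem_erase k univ),
    insert_erase (mem_univ k), sum_add_distrib]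

end SetDeriv

section MultilinearExtension

variable {n : ℕ}

def mlextWeight (x : Fin n → ℝ) (S : Finset (Fin n)) : ℝ :=
  (∏ i ∈ S, x i) * ∏ i ∈ Sᶜ, (1 - x i)

lemma mlext_eq_sum_mlextWeight (f : Finset (Fin n) → ℝ) (x : Fin n → ℝ) :
    mlext n f x = ∑ S, f S * mlextWeight x S := rfl

lemma mlextWeight_nonneg {x : Fin n → ℝ} (hx : ∀ i, x i ∈ Set.Icc (0 : ℝ) 1)
    (S : Finset (Fin n)) : 0 ≤ mlextWeight x S :=
  mul_nonneg (prod_nonneg fun i _ => (hx i).1)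
    (prod_nonneg fun i _ => sub_nonneg.2 (hx i).2)

lemma sum_mlextWeight (x : Fin n → ℝ) : ∑ S, mlextWeight x S = 1 := by
  simpa [mlextWeight] using (Fintype.prod_add x (fun i => 1 - x i)).symm

lemma mlext_const (c : ℝ) (x : Fin n → ℝ) : mlext n (fun _ => c) x = c := by
  rw [mlext_eq_sum_mlextWeight, ← mul_sum, sum_mlextWeight, mul_one]

lemma mlext_mono {f g : Finset (Fin n) → ℝ} {x : Fin n → ℝ}
    (hx : ∀ i, x i ∈ Set.Icc (0 : ℝ) 1) (hfg : ∀ S, f S ≤ g S) :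
    mlext n f x ≤ mlext n g x :=
  sum_le_sum fun S _ => mul_le_mul_of_nonneg_right (hfg S) (mlextWeight_nonneg hx S)

lemma abs_mlext_le {f : Finset (Fin n) → ℝ} {c : ℝ} {x : Fin n → ℝ}
    (hx : ∀ i, x i ∈ Set.Icc (0 : ℝ) 1) (hf : ∀ S, |f S| ≤ c) : |mlext n f x| ≤ c := by
  have lower := mlext_mono hx fun S => (abs_le.1 (hf S)).1
  have upper := mlext_mono hx fun S => (abs_le.1 (hf S)).2
  rw [mlext_const] at lower upper
  exact abs_le.2 ⟨lower, upper⟩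

lemma mlext_sub (f g : Finset (Fin n) → ℝ) (x : Fin n → ℝ) :
    mlext n (fun S => f S - g S) x = mlext n f x - mlext n g x := by
  simp only [mlext_eq_sum_mlextWeight, sub_mul, sum_sub_distrib]

lemma prod_one_sub_update_of_notMem (x : Fin n → ℝ) (t : ℝ) {k : Fin n} {s : Finset (Fin n)}
    (hk : k ∉ s) : ∏ i ∈ s, (1 - update x k t i) = ∏ i ∈ s, (1 - x i) :=
  prod_congr rfl fun i hi => by rw [update_of_ne (ne_of_mem_of_not_mem hi hk)]

lemma mlextWeight_update_of_notMem (x : Fin n → ℝ) (t : ℝ) {k : Fin n} {T : Finset (Fin n)}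
    (hk : k ∉ T) :
    mlextWeight (update x k t) T = (1 - t) * ((∏ i ∈ T, x i) * ∏ i ∈ (insert k T)ᶜ, (1 - x i)) := by
  rw [mlextWeight, prod_update_of_notMem hk, ← mul_prod_erase _ _ (mem_compl.2 hk), update_self,
    ← compl_insert, prod_one_sub_update_of_notMem x t (by simp)]
  ring

lemma mlextWeight_update_insert (x : Fin n → ℝ) (t : ℝ) {k : Fin n} {T : Finset (Fin n)}
    (hk : k ∉ T) :
    mlextWeight (update x k t) (insert k T) =
      t * ((∏ i ∈ T, x i) * ∏ i ∈ (insert k T)ᶜ, (1 - x i)) := by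
  rw [mlextWeight, prod_insert hk, update_self, prod_update_of_notMem hk,
    prod_one_sub_update_of_notMem x t (by simp)]
  ring

lemma mlext_update_eq_add (f : Finset (Fin n) → ℝ) (x : Fin n → ℝ) (k : Fin n) (t : ℝ) :
    mlext n f (update x k t) =
      t * mlext n f (update x k 1) + (1 - t) * mlext n f (update x k 0) := by
  simp only [mlext_eq_sum_mlextWeight, sum_eq_sum_powerset_erase_add_insert k, mul_sum,
    ← sum_add_distrib]
  refine sum_congr rfl fun T hT => ?_
  have hk : k ∉ T := fun h => notMem_erase k univ (mem_powerset.1 hT h)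
  simp only [mlextWeight_update_of_notMem x _ hk, mlextWeight_update_insert x _ hk]
  ring

lemma mlext_update_s18 (f : Finset (Fin n) → ℝ) (x : Fin n → ℝ) (k : Fin n) (t : ℝ) :
    mlext n f (update x k t) = mlext n f x + (t - x k) * mlextDeriv n f x k := by
  have hx := mlext_update_eq_add f x k (x k)
  rw [update_eq_self] at hx
  rw [mlext_update_eq_add, hx, mlextDeriv]
  ring

lemma mlextDeriv_eq_mlext_setDeriv (f : Finset (Fin n) → ℝ) (x : Fin n → ℝ) (k : Fin n) :
    mlextDeriv n f x k = mlext n (setDeriv k f) x := by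
  rw [mlextDeriv, ← update_eq_self k x]
  simp only [mlext_eq_sum_mlextWeight, sum_eq_sum_powerset_erase_add_insert k, update_idem,
    ← sum_sub_distrib]
  refine sum_congr rfl fun T hT => ?_
  have hk : k ∉ T := fun h => notMem_erase k univ (mem_powerset.1 hT h)
  simp only [mlextWeight_update_of_notMem x _ hk, mlextWeight_update_insert x _ hk, setDeriv,
    insert_idem, erase_insert hk, erase_eq_of_notMem hk]
  ring

lemma mlextDeriv_sub (f g : Finset (Fin n) → ℝ) (x : Fin n → ℝ) (k : Fin n) :
    mlextDeriv n (fun S => f S - g S) x k = mlextDeriv n f x k - mlextDeriv n g x k := by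
  simp only [mlextDeriv, mlext_sub]
  ring

lemma abs_mlextDeriv_le {f : Finset (Fin n) → ℝ} {c : ℝ} {x : Fin n → ℝ}
    (hx : ∀ i, x i ∈ Set.Icc (0 : ℝ) 1) (hf : ∀ S T, |f S - f T| ≤ c) (k : Fin n) :
    |mlextDeriv n f x k| ≤ c := by
  rw [mlextDeriv_eq_mlext_setDeriv]
  exact abs_mlext_le hx fun S => hf _ _

lemma abs_mlextDeriv_sub_le {f g : Finset (Fin n) → ℝ} {ε : ℝ} {x : Fin n → ℝ}
    (hx : ∀ i, x i ∈ Set.Icc (0 : ℝ) 1) (hfg : ∀ S, |f S - g S| ≤ ε) (k : Fin n) :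
    |mlextDeriv n f x k - mlextDeriv n g x k| ≤ 2 * ε := by
  rw [← mlextDeriv_sub]
  refine abs_mlextDeriv_le hx (fun S T => ?_) k
  calc |f S - g S - (f T - g T)| ≤ |f S - g S| + |f T - g T| := abs_sub _ _
    _ ≤ ε + ε := add_le_add (hfg S) (hfg T)
    _ = 2 * ε := by ring

end MultilinearExtension

section Hybrid

variable {n : ℕ} {x y : Fin n → ℝ}

lemma piecewise_mem_Icc (hx : ∀ i, x i ∈ Set.Icc (0 : ℝ) 1) (hy : ∀ i, y i ∈ Set.Icc (0 : ℝ) 1)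
    (A : Finset (Fin n)) (i : Fin n) : A.piecewise y x i ∈ Set.Icc (0 : ℝ) 1 :=
  A.piecewise_cases y x (· ∈ Set.Icc (0 : ℝ) 1) (hy i) (hx i)

lemma abs_mlext_piecewise_sub_le {g : Finset (Fin n) → ℝ} {c : ℝ}
    (hx : ∀ i, x i ∈ Set.Icc (0 : ℝ) 1) (hy : ∀ i, y i ∈ Set.Icc (0 : ℝ) 1)
    (hg : ∀ S T, |g S - g T| ≤ c) (A : Finset (Fin n)) :
    |mlext n g (A.piecewise y x) - mlext n g x| ≤ c * ∑ i ∈ A, |y i - x i| := by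
  induction A using Finset.induction_on with
  | empty => simp
  | @insert k A hk ih =>
    rw [piecewise_insert, mlext_update_s18, piecewise_eq_of_notMem _ _ _ hk, sum_insert hk]
    have hderiv := abs_mlextDeriv_le (piecewise_mem_Icc hx hy A) hg k
    calc _ ≤ |mlext n g (A.piecewise y x) - mlext n g x| +
          |y k - x k| * |mlextDeriv n g (A.piecewise y x) k| := by
          rw [← abs_mul]; exact (congrArg abs (by ring)).trans_le (abs_add_le _ _)
      _ ≤ c * ∑ i ∈ A, |y i - x i| + |y k - x k| * c := by gcongr
      _ = c * (|y k - x k| + ∑ i ∈ A, |y i - x i|) := by ring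

lemma abs_mlext_piecewise_sub_sum_le {f : Finset (Fin n) → ℝ} {c : ℝ}
    (hx : ∀ i, x i ∈ Set.Icc (0 : ℝ) 1) (hy : ∀ i, y i ∈ Set.Icc (0 : ℝ) 1)
    (hf : ∀ S T, |f S - f T| ≤ c) (A : Finset (Fin n)) :
    |mlext n f (A.piecewise y x) - mlext n f x - ∑ i ∈ A, mlextDeriv n f x i * (y i - x i)| ≤
      c * (∑ i ∈ A, |y i - x i|) ^ 2 := by
  induction A using Finset.induction_on with
  | empty => simp
  | @insert k A hk ih =>
    rw [piecewise_insert, mlext_update_s18, piecewise_eq_of_notMem _ _ _ hk, sum_insert hk,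
      sum_insert hk]
    have hc : 0 ≤ c := (abs_nonneg _).trans (hf ∅ ∅)
    have hderiv : |mlextDeriv n f (A.piecewise y x) k - mlextDeriv n f x k| ≤
        2 * c * ∑ i ∈ A, |y i - x i| := by
      simp only [mlextDeriv_eq_mlext_setDeriv]
      exact abs_mlext_piecewise_sub_le hx hy (abs_setDeriv_sub_le hf k) A
    set s := ∑ i ∈ A, |y i - x i|
    set E := mlext n f (A.piecewise y x) - mlext n f x - ∑ i ∈ A, mlextDeriv n f x i * (y i - x i)
    calc _ ≤ |E| + |y k - x k| * |mlextDeriv n f (A.piecewise y x) k - mlextDeriv n f x k| := by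
          rw [← abs_mul]; exact (congrArg abs (by ring)).trans_le (abs_add_le _ _)
      _ ≤ c * s ^ 2 + |y k - x k| * (2 * c * s) := by gcongr
      _ ≤ c * (|y k - x k| + s) ^ 2 := by nlinarith [mul_nonneg hc (sq_nonneg |y k - x k|)]

lemma abs_mlext_sub_sum_le {f : Finset (Fin n) → ℝ} {c : ℝ}
    (hx : ∀ i, x i ∈ Set.Icc (0 : ℝ) 1) (hy : ∀ i, y i ∈ Set.Icc (0 : ℝ) 1)
    (hf : ∀ S T, |f S - f T| ≤ c) :
    |mlext n f y - mlext n f x - ∑ i, mlextDeriv n f x i * (y i - x i)| ≤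
      c * (∑ i, |y i - x i|) ^ 2 := by
  simpa using abs_mlext_piecewise_sub_sum_le hx hy hf univ

end Hybrid

namespace Submodular

variable {n : ℕ} {f : Finset (Fin n) → ℝ} {x y : Fin n → ℝ}

lemma mlextDeriv_update_le (hf : Submodular f) (hx : ∀ i, x i ∈ Set.Icc (0 : ℝ) 1)
    {k : Fin n} {t : ℝ} (ht : x k ≤ t) (j : Fin n) :
    mlextDeriv n f (update x k t) j ≤ mlextDeriv n f x j := by
  rw [mlextDeriv_eq_mlext_setDeriv, mlextDeriv_eq_mlext_setDeriv, mlext_update_s18,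
    mlextDeriv_eq_mlext_setDeriv]
  have hcross : mlext n (setDeriv k (setDeriv j f)) x ≤ 0 := by
    simpa only [mlext_const] using mlext_mono hx (hf.setDeriv_setDeriv_nonpos j k)
  exact add_le_of_nonpos_right (mul_nonpos_of_nonneg_of_nonpos (sub_nonneg.2 ht) hcross)

lemma mlextDeriv_piecewise_le (hf : Submodular f) (hx : ∀ i, x i ∈ Set.Icc (0 : ℝ) 1)
    (hy : ∀ i, y i ∈ Set.Icc (0 : ℝ) 1) (hxy : x ≤ y) (A : Finset (Fin n)) (j : Fin n) :
    mlextDeriv n f (A.piecewise y x) j ≤ mlextDeriv n f x j := by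
  induction A using Finset.induction_on with
  | empty => simp
  | @insert k A hk ih =>
    rw [piecewise_insert]
    refine (hf.mlextDeriv_update_le (piecewise_mem_Icc hx hy A) ?_ j).trans ih
    rw [piecewise_eq_of_notMem _ _ _ hk]
    exact hxy k

lemma mlext_piecewise_sub_le (hf : Submodular f) (hx : ∀ i, x i ∈ Set.Icc (0 : ℝ) 1)
    (hy : ∀ i, y i ∈ Set.Icc (0 : ℝ) 1) (hxy : x ≤ y) (A : Finset (Fin n)) :
    mlext n f (A.piecewise y x) - mlext n f x ≤ ∑ i ∈ A, mlextDeriv n f x i * (y i - x i) := by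
  induction A using Finset.induction_on with
  | empty => simp
  | @insert k A hk ih =>
    rw [piecewise_insert, mlext_update_s18, piecewise_eq_of_notMem _ _ _ hk, sum_insert hk]
    have := mul_le_mul_of_nonneg_right (hf.mlextDeriv_piecewise_le hx hy hxy A k)
      (sub_nonneg.2 (hxy k))
    linarith

end Submodular

lemma sum_mul_le_sum_mul_add_card_mul {ι : Type*} (s : Finset ι) {a b w : ι → ℝ} {e : ℝ}
    (hab : ∀ i ∈ s, |a i - b i| ≤ e) (hw : ∀ i ∈ s, w i ∈ Set.Icc (0 : ℝ) 1) :
    ∑ i ∈ s, a i * w i ≤ ∑ i ∈ s, b i * w i + #s * e := by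
  rw [← nsmul_eq_mul, ← sum_const, ← sum_add_distrib]
  refine sum_le_sum fun i hi => ?_
  have hdiff := (abs_le.1 (hab i hi)).2
  have he := (abs_nonneg _).trans (hab i hi)
  nlinarith [(hw i hi).1, (hw i hi).2]

lemma add_mul_one_sub_mul_mem_Icc {a b t : ℝ} (ha : a ∈ Set.Icc (0 : ℝ) 1)
    (hb : b ∈ Set.Icc (0 : ℝ) 1) (ht : t ∈ Set.Icc (0 : ℝ) 1) :
    a + t * (1 - a) * b ∈ Set.Icc (0 : ℝ) 1 := by
  rw [Set.Icc.mem_iff_one_sub_mem]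
  convert unitInterval.mul_mem (Set.Icc.mem_iff_one_sub_mem.1 (unitInterval.mul_mem ht hb))
    (Set.Icc.mem_iff_one_sub_mem.1 ha) using 1
  ring

section MeasuredGreedy

variable {n : ℕ} {f : Finset (Fin n) → ℝ} {x y : Fin n → ℝ}

lemma mlext_measured_step_ge {fmax δ : ℝ} (hf0 : ∀ S, 0 ≤ f S) (hfmax : ∀ S, f S ≤ fmax)
    (hδ : δ ∈ Set.Icc (0 : ℝ) 1) (hx : ∀ i, x i ∈ Set.Icc (0 : ℝ) 1)
    (hy : ∀ i, y i ∈ Set.Icc (0 : ℝ) 1) :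
    δ * ∑ i, mlextDeriv n f x i * (1 - x i) * y i - (n : ℝ) ^ 2 * δ ^ 2 * fmax ≤
      mlext n f (fun i => x i + δ * (1 - x i) * y i) - mlext n f x := by
  have htaylor := abs_mlext_sub_sum_le hx
    (fun i => add_mul_one_sub_mul_mem_Icc (hx i) (hy i) hδ)
    (fun S T => abs_sub_le_of_nonneg_of_le (hf0 S) (hfmax S) (hf0 T) (hfmax T))
  have hlinear : ∑ i, mlextDeriv n f x i * (x i + δ * (1 - x i) * y i - x i) =
      δ * ∑ i, mlextDeriv n f x i * (1 - x i) * y i := by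
    rw [mul_sum]; exact sum_congr rfl fun i _ => by ring
  have hw : ∀ i, (1 - x i) * y i ∈ Set.Icc (0 : ℝ) 1 := fun i =>
    unitInterval.mul_mem (Set.Icc.mem_iff_one_sub_mem.1 (hx i)) (hy i)
  have hlength : ∑ i, |x i + δ * (1 - x i) * y i - x i| ≤ n * δ := by
    have hle : ∀ i ∈ univ, |x i + δ * (1 - x i) * y i - x i| ≤ δ := fun i _ => by
      rw [add_sub_cancel_left, mul_assoc, abs_of_nonneg (mul_nonneg hδ.1 (hw i).1)]
      exact mul_le_of_le_one_right hδ.1 (hw i).2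
    simpa using sum_le_card_nsmul univ _ δ hle
  have hfmax0 : 0 ≤ fmax := (hf0 ∅).trans (hfmax ∅)
  have herror : fmax * (∑ i, |x i + δ * (1 - x i) * y i - x i|) ^ 2 ≤ fmax * (n * δ) ^ 2 := by
    gcongr
  rw [hlinear] at htaylor
  linarith [(abs_le.1 htaylor).1]

lemma Submodular.sub_le_sum_mlextDeriv_of_approx {fh : Finset (Fin n) → ℝ} {O : Finset (Fin n)}
    {ε : ℝ} (hf : Submodular f) (hε : 0 ≤ ε) (happrox : ∀ S, |fh S - f S| ≤ ε)
    (hx : ∀ i, x i ∈ Set.Icc (0 : ℝ) 1) (hy : ∀ i, y i ∈ Set.Icc (0 : ℝ) 1)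
    (hchoice : ∑ i, mlextDeriv n fh x i * (1 - x i) * y i ≥
      ∑ i ∈ O, mlextDeriv n fh x i * (1 - x i)) :
    mlext n f (fun j => if j ∈ O then 1 else x j) - mlext n f x - 4 * n * ε ≤
      ∑ i, mlextDeriv n f x i * (1 - x i) * y i := by
  have hderiv := abs_mlextDeriv_sub_le hx happrox
  have hchosen := sum_mul_le_sum_mul_add_card_mul univ (fun i _ => hderiv i)
    (fun i _ => unitInterval.mul_mem (Set.Icc.mem_iff_one_sub_mem.1 (hx i)) (hy i))
  have hoptimal := sum_mul_le_sum_mul_add_card_mul O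
    (fun i _ => (abs_sub_comm _ _).trans_le (hderiv i))
    (fun i _ => Set.Icc.mem_iff_one_sub_mem.1 (hx i))
  have hconcave : mlext n f (fun j => if j ∈ O then 1 else x j) - mlext n f x ≤
      ∑ i ∈ O, mlextDeriv n f x i * (1 - x i) :=
    hf.mlext_piecewise_sub_le hx (fun _ => Set.right_mem_Icc.2 zero_le_one) (fun i => (hx i).2) O
  have hcard : (#O : ℝ) * (2 * ε) ≤ n * (2 * ε) := by
    gcongr
    simpa using card_le_univ O
  simp only [mul_assoc, card_univ, Fintype.card_fin] at hchoice hchosen ⊢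
  linarith

end MeasuredGreedy

theorem measured_continuous_greedy_step (n : ℕ) (f fh : Finset (Fin n) → ℝ)
    (hf0 : ∀ S : Finset (Fin n), 0 ≤ f S) (hf : Submodular f)
    (fmax : ℝ) (hfmax : ∀ S : Finset (Fin n), f S ≤ fmax)
    (O : Finset (Fin n)) (ε : ℝ) (hε : 0 ≤ ε)
    (happrox : ∀ S : Finset (Fin n), |fh S - f S| ≤ ε)
    (δ : ℝ) (hδ0 : 0 < δ) (hδ1 : δ < 1)
    (x y : Fin n → ℝ) (hx : ∀ i, x i ∈ Set.Icc (0 : ℝ) 1) (hy : ∀ i, y i ∈ Set.Icc (0 : ℝ) 1)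
    (hchoice : ∑ i : Fin n, mlextDeriv n fh x i * (1 - x i) * y i ≥
      ∑ i ∈ O, mlextDeriv n fh x i * (1 - x i)) :
    mlext n f (fun i => x i + δ * (1 - x i) * y i) - mlext n f x ≥
      δ * (mlext n f (fun j => if j ∈ O then 1 else x j) - mlext n f x) -
        4 * (n : ℝ) * δ * ε - (n : ℝ) ^ 3 * δ ^ 2 * fmax := by
  have hstep := mlext_measured_step_ge hf0 hfmax ⟨hδ0.le, hδ1.le⟩ hx hy
  have hgain := mul_le_mul_of_nonneg_left
    (hf.sub_le_sum_mlextDeriv_of_approx hε happrox hx hy hchoice) hδ0.le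
  have hcube : (n : ℝ) ^ 2 ≤ n ^ 3 := by
    rcases n.eq_zero_or_pos with rfl | hn
    · simp
    · exact pow_le_pow_right₀ (by exact_mod_cast hn) (by norm_num)
  have herror : (n : ℝ) ^ 2 * δ ^ 2 * fmax ≤ n ^ 3 * δ ^ 2 * fmax := by
    have := (hf0 ∅).trans (hfmax ∅)
    gcongr
  linarith
end

section
/- (Unconstrained smoothing guarantee.) Let f : 2^N → ℝ be a non-negative submodular function on a finite ground set N with |N| = n, let O* ∈ argmax_{S ⊆ N} f(S), and let h, t be integers with 1 ≤ t < h < n. Then the average over all size-h subsets H of N satisfies (1/binom(n,h)) · Σ_{H ⊆ N, |H| = h} max{ F^{H,t}(S) : S ⊆ N \ H } ≥ (1 − 2h/(n − h)) · f(O*). -/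
/-!
Take `S = O* \ H`. Submodularity gives
`f ((O* \ H) ∪ H') ≥ f (O* ∪ H') + f (O* \ (H \ H')) - f O*` for `H' ⊆ H`, and averaging over `H`
makes `H'` a uniform `t`-set and `H \ H'` a uniform `(h - t)`-set. For submodular `g` and a
uniform `k`-subset `A` of an `n`-set `N`, comparing `g` with a modular minorant that is tight on `N`
gives `E g(A) ≥ (1 - k/n) g(∅) + (k/n) g(N)`. Applied to `X ↦ f (O* ∪ X)` and `X ↦ f (O* \ X)`, this
bounds the average by `(1 - h/n) f O* ≥ (1 - 2h/(n - h)) f O*`.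
-/

open Finset

namespace Finset

variable {α : Type*} [DecidableEq α]

theorem sum_powersetCard_sum_powersetCard_s19 (s : Finset α) {h t : ℕ} (hth : t ≤ h)
    (φ : Finset α → ℝ) :
    ∑ H ∈ s.powersetCard h, ∑ H' ∈ H.powersetCard t, φ H' =
      (#s - t).choose (h - t) * ∑ H' ∈ s.powersetCard t, φ H' := by
  rw [sum_comm' (s' := fun H' => (s.powersetCard h).filter (H' ⊆ ·)) (t' := s.powersetCard t),
    mul_sum]
  · refine sum_congr rfl fun H' hH' => ?_
    obtain ⟨hH's, hH't⟩ := mem_powersetCard.1 hH'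
    rw [sum_const, card_filter_powersetCard_subset H' s h hH's (hH't ▸ hth), hH't, nsmul_eq_mul]
  · intro H H'
    simp only [mem_powersetCard, mem_filter]
    exact ⟨fun ⟨hH, hH'H, hH't⟩ => ⟨⟨hH, hH'H⟩, hH'H.trans hH.1, hH't⟩,
      fun ⟨⟨hH, hH'H⟩, _, hH't⟩ => ⟨hH, hH'H, hH't⟩⟩

theorem sum_powersetCard_sum (s : Finset α) (k : ℕ) (w : α → ℝ) :
    ∑ A ∈ s.powersetCard (k + 1), ∑ x ∈ A, w x = (#s - 1).choose k * ∑ x ∈ s, w x := by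
  have h := sum_powersetCard_sum_powersetCard_s19 s (Nat.le_add_left 1 k) (fun X => ∑ x ∈ X, w x)
  simpa only [powersetCard_one, sum_map, Function.Embedding.coeFn_mk, sum_singleton,
    Nat.add_sub_cancel] using h

theorem sum_powersetCard_sdiff {H : Finset α} {t : ℕ} (ht : t ≤ #H) (φ : Finset α → ℝ) :
    ∑ H' ∈ H.powersetCard t, φ (H \ H') = ∑ K ∈ H.powersetCard (#H - t), φ K := by
  refine sum_nbij' (H \ ·) (H \ ·) (fun X hX => ?_) (fun X hX => ?_) (fun X hX => ?_)
    (fun X hX => ?_) fun _ _ => rfl <;>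
    obtain ⟨hXH, hXc⟩ := mem_powersetCard.1 (mem_coe.1 hX)
  · exact mem_coe.2 (mem_powersetCard.2 ⟨sdiff_subset, by rw [card_sdiff_of_subset hXH, hXc]⟩)
  · refine mem_coe.2 (mem_powersetCard.2 ⟨sdiff_subset, ?_⟩)
    rw [card_sdiff_of_subset hXH, hXc]
    omega
  · exact sdiff_sdiff_eq_self hXH
  · exact sdiff_sdiff_eq_self hXH

theorem sum_powersetCard_sum_powersetCard_sdiff (s : Finset α) {h t : ℕ} (hth : t ≤ h)
    (φ : Finset α → ℝ) :
    ∑ H ∈ s.powersetCard h, ∑ H' ∈ H.powersetCard t, φ (H \ H') =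
      (#s - (h - t)).choose t * ∑ K ∈ s.powersetCard (h - t), φ K := by
  have hcard : ∀ H ∈ s.powersetCard h, ∑ H' ∈ H.powersetCard t, φ (H \ H') =
      ∑ K ∈ H.powersetCard (h - t), φ K := fun H hH => by
    rw [← (mem_powersetCard.1 hH).2]
    exact sum_powersetCard_sdiff ((mem_powersetCard.1 hH).2 ▸ hth) φ
  rw [sum_congr rfl hcard, sum_powersetCard_sum_powersetCard_s19 s (Nat.sub_le h t),
    Nat.sub_sub_self hth]

end Finset

namespace Submodular

variable {α : Type*} [DecidableEq α] {f : Finset α → ℝ}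

theorem diminishing_returns (hf : Submodular f) {S T : Finset α} (hST : S ⊆ T) {a : α}
    (ha : a ∉ T) : f (insert a T) - f T ≤ f (insert a S) - f S := by
  have h := hf (insert a S) T
  rw [insert_union, union_eq_right.2 hST, insert_inter_of_notMem ha,
    inter_eq_left.2 hST] at h
  linarith

/-- Edmonds' greedy vector: the weights are the marginal gains along the chain building up `s`. -/
theorem exists_modular_minorant (hf : Submodular f) (s : Finset α) :
    ∃ w : α → ℝ, ∑ x ∈ s, w x = f s - f ∅ ∧ ∀ A ⊆ s, f ∅ + ∑ x ∈ A, w x ≤ f A := by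
  induction s using Finset.induction_on with
  | empty => exact ⟨0, by simp, fun A hA => by simp [subset_empty.1 hA]⟩
  | insert a s ha ih =>
    obtain ⟨w, hsum, hle⟩ := ih
    set w' := Function.update w a (f (insert a s) - f s)
    have hwa : w' a = f (insert a s) - f s := Function.update_self ..
    have hw' : ∀ B ⊆ s, ∑ x ∈ B, w' x = ∑ x ∈ B, w x := fun B hB =>
      sum_congr rfl fun x hx => Function.update_of_ne (ne_of_mem_of_not_mem (hB hx) ha) _ _
    refine ⟨w', ?_, fun A hA => ?_⟩
    · rw [sum_insert ha, hw' s subset_rfl, hsum, hwa]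
      ring
    by_cases haA : a ∈ A
    · have hB : A.erase a ⊆ s := (erase_subset_erase a hA).trans (erase_insert_subset a s)
      have hmarg := hf.diminishing_returns hB ha
      have hBle := hle _ hB
      rw [← insert_erase haA, sum_insert (notMem_erase a A), hw' _ hB, hwa]
      linarith
    · have hAs : A ⊆ s := (subset_insert_iff_of_notMem haA).1 hA
      rw [hw' A hAs]
      exact hle A hAs

theorem le_card_mul_sum_powersetCard (hf : Submodular f) {s : Finset α} (hs : 0 ≤ f s) (k : ℕ) :
    ((#s : ℝ) - k) * (#s).choose k * f ∅ ≤ #s * ∑ A ∈ s.powersetCard k, f A := by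
  cases k with
  | zero => simp
  | succ k =>
    obtain ⟨w, hsum, hle⟩ := hf.exists_modular_minorant s
    have hsum_le : ∑ A ∈ s.powersetCard (k + 1), (f ∅ + ∑ x ∈ A, w x) ≤
        ∑ A ∈ s.powersetCard (k + 1), f A :=
      sum_le_sum fun A hA => hle A (mem_powersetCard.1 hA).1
    rw [sum_add_distrib, sum_const, card_powersetCard, nsmul_eq_mul, sum_powersetCard_sum,
      hsum] at hsum_le
    have hchoose : (#s : ℝ) * (#s - 1).choose k = (k + 1) * (#s).choose (k + 1) := by
      have h := Nat.choose_mul (n := #s) (Nat.le_add_left 1 k)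
      simp only [Nat.choose_one_right, Nat.add_sub_cancel] at h
      exact_mod_cast (h.symm.trans (mul_comm _ _))
    calc ((#s : ℝ) - (k + 1 : ℕ)) * (#s).choose (k + 1) * f ∅
        ≤ #s * (#s).choose (k + 1) * f ∅ + (k + 1) * (#s).choose (k + 1) * (f s - f ∅) := by
          have hgain : (0 : ℝ) ≤ (k + 1) * (#s).choose (k + 1) * f s :=
            mul_nonneg (by positivity) hs
          push_cast
          linarith
      _ = #s * ((#s).choose (k + 1) * f ∅ + (#s - 1).choose k * (f s - f ∅)) := by
          linear_combination (f s - f ∅) * hchoose.symm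
      _ ≤ #s * ∑ A ∈ s.powersetCard (k + 1), f A := by gcongr

theorem comp_union_left (hf : Submodular f) (O : Finset α) :
    Submodular fun X => f (O ∪ X) := fun A B => by
  have h := hf (O ∪ A) (O ∪ B)
  rwa [← union_union_distrib_left, ← union_inter_distrib_left] at h

theorem comp_sdiff_left (hf : Submodular f) (O : Finset α) :
    Submodular fun X => f (O \ X) := fun A B => by
  have h := hf (O \ A) (O \ B)
  rw [← sdiff_inter_distrib_right, ← sdiff_union_distrib] at h
  simp only [ge_iff_le] at h ⊢
  linarith

theorem add_le_sdiff_union_add (hf : Submodular f) (O : Finset α) {H H' : Finset α} (hH' : H' ⊆ H) :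
    f (O ∪ H') + f (O \ (H \ H')) ≤ f (O \ H ∪ H') + f O := by
  have h := hf (O \ H ∪ H') O
  have hunion : O \ H ∪ H' ∪ O = O ∪ H' := by
    ext z; simp only [mem_union, mem_sdiff]; tauto
  have hinter : (O \ H ∪ H') ∩ O = O \ (H \ H') := by
    ext z; simp only [mem_union, mem_sdiff, mem_inter]
    have := @hH' z; tauto
  rw [hunion, hinter] at h
  linarith

theorem le_card_mul_sum_sum_sdiff_union (hf : Submodular f) (hf0 : ∀ S, 0 ≤ f S)
    (s O : Finset α) {h t : ℕ} (hth : t ≤ h) :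
    ((#s : ℝ) - h) * ((#s).choose h * h.choose t) * f O ≤
      #s * ∑ H ∈ s.powersetCard h, ∑ H' ∈ H.powersetCard t, f (O \ H ∪ H') := by
  have hunion := (hf.comp_union_left O).le_card_mul_sum_powersetCard (hf0 (O ∪ s)) t
  have hsdiff := (hf.comp_sdiff_left O).le_card_mul_sum_powersetCard (hf0 (O \ s)) (h - t)
  simp only [union_empty, sdiff_empty] at hunion hsdiff
  have hpair : ∑ H ∈ s.powersetCard h, ∑ H' ∈ H.powersetCard t,
      (f (O ∪ H') + f (O \ (H \ H')) - f O) ≤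
      ∑ H ∈ s.powersetCard h, ∑ H' ∈ H.powersetCard t, f (O \ H ∪ H') :=
    sum_le_sum fun H _ => sum_le_sum fun H' hH' => by
      linarith [hf.add_le_sdiff_union_add O (mem_powersetCard.1 hH').1]
  have hconst : ∀ H ∈ s.powersetCard h, ∑ _H' ∈ H.powersetCard t, f O = (h.choose t : ℝ) * f O :=
    fun H hH => by rw [sum_const, card_powersetCard, (mem_powersetCard.1 hH).2, nsmul_eq_mul]
  simp only [sum_sub_distrib, sum_add_distrib] at hpair
  rw [sum_powersetCard_sum_powersetCard_s19 _ hth (fun X => f (O ∪ X)),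
    sum_powersetCard_sum_powersetCard_sdiff _ hth (fun K => f (O \ K)),
    sum_congr rfl hconst, sum_const, card_powersetCard, nsmul_eq_mul] at hpair
  have hchoose₁ : ((#s - t).choose (h - t) : ℝ) * (#s).choose t = (#s).choose h * h.choose t := by
    rw [mul_comm]
    exact_mod_cast (Nat.choose_mul hth).symm
  have hchoose₂ :
      ((#s - (h - t)).choose t : ℝ) * (#s).choose (h - t) = (#s).choose h * h.choose t := by
    have e := Nat.choose_mul (n := #s) (Nat.sub_le h t)
    rw [Nat.choose_symm hth, Nat.sub_sub_self hth] at e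
    rw [mul_comm]
    exact_mod_cast e.symm
  rw [Nat.cast_sub hth] at hsdiff
  calc ((#s : ℝ) - h) * ((#s).choose h * h.choose t) * f O
      = (#s - t).choose (h - t) * ((#s - t) * (#s).choose t * f O)
        + (#s - (h - t)).choose t * ((#s - (h - t)) * (#s).choose (h - t) * f O)
        - #s * ((#s).choose h * (h.choose t * f O)) := by
        linear_combination (-((#s : ℝ) - t) * f O) * hchoose₁
          + (-((#s : ℝ) - (h - t)) * f O) * hchoose₂
    _ ≤ (#s - t).choose (h - t) * (#s * ∑ A ∈ s.powersetCard t, f (O ∪ A))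
        + (#s - (h - t)).choose t * (#s * ∑ A ∈ s.powersetCard (h - t), f (O \ A))
        - #s * ((#s).choose h * (h.choose t * f O)) := by gcongr
    _ ≤ #s * ∑ H ∈ s.powersetCard h, ∑ H' ∈ H.powersetCard t, f (O \ H ∪ H') := by
        linarith [mul_le_mul_of_nonneg_left hpair (Nat.cast_nonneg (α := ℝ) #s)]

theorem le_card_mul_sum_surrogate_sdiff (hf : Submodular f) (hf0 : ∀ S, 0 ≤ f S)
    (s O : Finset α) {h t : ℕ} (hth : t ≤ h) :
    ((#s : ℝ) - h) * (#s).choose h * f O ≤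
      #s * ∑ H ∈ s.powersetCard h, surrogate f H t (O \ H) := by
  have hsurr : ∀ H ∈ s.powersetCard h, surrogate f H t (O \ H) =
      (h.choose t : ℝ)⁻¹ * ∑ H' ∈ H.powersetCard t, f (O \ H ∪ H') := fun H hH => by
    rw [surrogate, (mem_powersetCard.1 hH).2, one_div]
  have hpos : (0 : ℝ) < h.choose t := Nat.cast_pos.2 (Nat.choose_pos hth)
  have hmain := hf.le_card_mul_sum_sum_sdiff_union hf0 s O hth
  rw [sum_congr rfl hsurr, ← mul_sum, mul_left_comm, le_inv_mul_iff₀ hpos]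
  linarith

end Submodular

theorem le_sSup_surrogate {α : Type*} [DecidableEq α] [Fintype α] (f : Finset α → ℝ)
    (H : Finset α) (t : ℕ) {S T : Finset α} (hS : S ⊆ T) :
    surrogate f H t S ≤ sSup {y : ℝ | ∃ S : Finset α, S ⊆ T ∧ y = surrogate f H t S} := by
  refine le_csSup (((Set.finite_range (surrogate f H t)).subset ?_).bddAbove) ⟨S, hS, rfl⟩
  rintro y ⟨S', -, rfl⟩
  exact ⟨S', rfl⟩

theorem unconstrained_smoothing_general {α : Type*} [DecidableEq α] [Fintype α]
    (n : ℕ) (hn : Fintype.card α = n)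
    (f : Finset α → ℝ) (hf0 : ∀ S : Finset α, 0 ≤ f S) (hf : Submodular f)
    (Ostar : Finset α)
    (h t : ℕ) (hth : t < h) (hhn : h < n) :
    (1 / (n.choose h : ℝ)) * ∑ H ∈ (Finset.univ : Finset α).powersetCard h,
        sSup {y : ℝ | ∃ S : Finset α, S ⊆ Finset.univ \ H ∧ y = surrogate f H t S} ≥
      (1 - 2 * (h : ℝ) / ((n : ℝ) - (h : ℝ))) * f Ostar := by
  subst hn
  have hkey := hf.le_card_mul_sum_surrogate_sdiff hf0 univ Ostar hth.le
  rw [card_univ] at hkey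
  have hnh : (0 : ℝ) < Fintype.card α - h := sub_pos.2 (Nat.cast_lt.2 hhn)
  have hchoose : (0 : ℝ) < (Fintype.card α).choose h := Nat.cast_pos.2 (Nat.choose_pos hhn.le)
  have hloss : 1 - 2 * (h : ℝ) / (Fintype.card α - h) ≤ (Fintype.card α - h) / Fintype.card α := by
    rw [sub_div, div_self (by linarith), sub_le_sub_iff_left]
    exact div_le_div₀ (by positivity) (by linarith) hnh (by linarith)
  calc (1 - 2 * (h : ℝ) / (Fintype.card α - h)) * f Ostar
      ≤ (Fintype.card α - h) / Fintype.card α * f Ostar := by gcongr; exact hf0 Ostar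
    _ ≤ 1 / (Fintype.card α).choose h * ∑ H ∈ univ.powersetCard h, surrogate f H t (Ostar \ H) := by
        rw [div_mul_eq_mul_div, one_div, inv_mul_eq_div, div_le_div_iff₀ (by linarith) hchoose]
        linarith
    _ ≤ _ := by
        gcongr with H
        exact le_sSup_surrogate f H t (sdiff_subset_sdiff (subset_univ _) le_rfl)

theorem unconstrained_smoothing {α : Type*} [DecidableEq α] [Fintype α]
    (n : ℕ) (hn : Fintype.card α = n)
    (f : Finset α → ℝ) (hf0 : ∀ S : Finset α, 0 ≤ f S) (hf : Submodular f)
    (Ostar : Finset α) (hOmax : ∀ S : Finset α, f S ≤ f Ostar)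
    (h t : ℕ) (ht1 : 1 ≤ t) (hth : t < h) (hhn : h < n) :
    (1 / (n.choose h : ℝ)) * ∑ H ∈ (Finset.univ : Finset α).powersetCard h,
        sSup {y : ℝ | ∃ S : Finset α, S ⊆ Finset.univ \ H ∧ y = surrogate f H t S} ≥
      (1 - 2 * (h : ℝ) / ((n : ℝ) - (h : ℝ))) * f Ostar :=
  unconstrained_smoothing_general n hn f hf0 hf Ostar h t hth hhn
end
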